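/- arXiv:0803.1076 — 7 statements merged into one kernel-verified Lean document; each statement's English description precedes it below -/
import Mathlib

section
/- Let n be a finite-dimensional nilpotent Lie algebra over a field k of characteristic zero and let (π, V) be a finite-dimensional representation of n. For each X ∈ n let π_S(X) and π_N(X) be, respectively, the semisimple and nilpotent parts of the additive Jordan decomposition of the endomorphism π(X). Then π_S : n → gl(V) and π_N : n → gl(V) are Lie algebra homomorphisms (i.e., representations of n), and moreover π_S(X) = 0 for all X in the derived algebra [n, n]. -/
open Module TensorProduct Polynomial LieModule

variable {k : Type} [Field k] {V : Type} [AddCommGroup V] [Module k V]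

lemma one_tmul_eq_zero {K : Type} [Field K] [Algebra k K] {v : V}
    (h : (1 : K) ⊗ₜ[k] v = 0) : v = 0 := by
  let b := Basis.ofVectorSpace k V
  have hrep : ∀ i, b.repr v i = 0 := by
    intro i
    have := congrArg (fun z => (b.baseChange K).repr z i) h
    simp only [Basis.baseChange_repr_tmul, map_zero, Finsupp.coe_zero, Pi.zero_apply,
      smul_eq_mul, mul_one] at this
    exact (algebraMap k K).injective (by simpa using this)
  have : b.repr v = 0 := Finsupp.ext hrep
  simpa using congrArg b.repr.symm this

lemma baseChange_end_inj (K : Type) [Field K] [Algebra k K] {f g : Module.End k V}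
    (h : Module.End.baseChangeHom k K V f = Module.End.baseChangeHom k K V g) : f = g := by
  ext v
  have h2 : (1 : K) ⊗ₜ[k] (f v) = (1 : K) ⊗ₜ[k] (g v) := by
    have h' : f.baseChange K = g.baseChange K := h
    simpa using LinearMap.congr_fun h' ((1 : K) ⊗ₜ[k] v)
  have : (1 : K) ⊗ₜ[k] (f v - g v) = 0 := by rw [tmul_sub, h2, sub_self]
  exact sub_eq_zero.mp (one_tmul_eq_zero this)

lemma isSemisimple_baseChange [FiniteDimensional k V] [PerfectField k]
    (K : Type) [Field K] [Algebra k K] {f : Module.End k V} (hf : f.IsSemisimple) :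
    (Module.End.baseChangeHom k K V f).IsSemisimple := by
  have h0 : Squarefree (minpoly k f) := hf.minpoly_squarefree
  have h1 : (minpoly k f).Separable := (PerfectField.separable_iff_squarefree).mpr h0
  have h2 : Squarefree ((minpoly k f).map (algebraMap k K)) := h1.map.squarefree
  refine Module.End.isSemisimple_of_squarefree_aeval_eq_zero h2 ?_
  rw [Polynomial.aeval_map_algebraMap, Polynomial.aeval_algHom_apply, minpoly.aeval, map_zero]

attribute [local instance 100] LieRing.ofAssociativeRing

theorem key_facts (k n V : Type) [Field k] [CharZero k]
    [AddCommGroup V] [Module k V] [FiniteDimensional k V]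
    [LieRing n] [LieAlgebra k n] [LieRing.IsNilpotent n]
    (π : n →ₗ⁅k⁆ Module.End k V) (S : n → Module.End k V)
    (hS : ∀ X, (S X).IsSemisimple)
    (hN : ∀ X, IsNilpotent (π X - S X))
    (hC : ∀ X, Commute (π X) (S X)) :
    (∀ X Y : n, Commute (S X) (π Y)) ∧ (∀ X Y : n, Commute (S X) (S Y)) ∧
      (∀ X Y : n, S (X + Y) = S X + S Y) ∧ (∀ (c : k) (X : n), S (c • X) = c • S X) ∧
      (∀ X Y : n, S ⁅X, Y⁆ = 0) := by
  letI : LieRingModule n V := LieRingModule.compLieHom V π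
  letI : LieModule k n V := LieModule.compLieHom V π
  have htoEnd : ∀ X : n, toEnd k n V X = π X := by intro X; ext m; rfl
  set K := AlgebraicClosure k with hK
  let bc : Module.End k V →ₐ[k] Module.End K (K ⊗[k] V) := Module.End.baseChangeHom k K V
  -- the base changed representation
  have htE : ∀ X : n, toEnd K (K ⊗[k] n) (K ⊗[k] V) ((1 : K) ⊗ₜ[k] X) = bc (π X) := by
    intro X
    rw [LieModule.toEnd_baseChange, htoEnd]
    rfl
  have scalar : ∀ (X : n) (χ : Weight K (K ⊗[k] n) (K ⊗[k] V)) (m : K ⊗[k] V),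
      m ∈ genWeightSpace (K ⊗[k] V) (χ : (K ⊗[k] n) → K) →
      bc (S X) m = χ ((1 : K) ⊗ₜ[k] X) • m := by
    intro X χ m hm
    have hm' : m ∈ (toEnd K (K ⊗[k] n) (K ⊗[k] V) ((1 : K) ⊗ₜ[k] X)).maxGenEigenspace
        (χ ((1 : K) ⊗ₜ[k] X)) :=
      genWeightSpace_le_genWeightSpaceOf (K ⊗[k] V) ((1 : K) ⊗ₜ[k] X) (χ : (K ⊗[k] n) → K) hm
    rw [htE X] at hm'
    refine Module.End.apply_eq_of_mem_of_comm_of_isFinitelySemisimple_of_isNil hm' ?_ ?_ ?_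
    · exact (hC X).map bc
    · exact (isSemisimple_baseChange K (hS X)).isFinitelySemisimple
    · rw [← map_sub]
      exact (hN X).map bc
  have ext_top : ∀ f g : Module.End K (K ⊗[k] V),
      (∀ (χ : Weight K (K ⊗[k] n) (K ⊗[k] V)) (m : K ⊗[k] V),
        m ∈ genWeightSpace (K ⊗[k] V) (χ : (K ⊗[k] n) → K) → f m = g m) → f = g := by
    intro f g h
    refine LinearMap.ext fun m => ?_
    have hm : m ∈ ⨆ χ : Weight K (K ⊗[k] n) (K ⊗[k] V),
        genWeightSpace (K ⊗[k] V) (χ : (K ⊗[k] n) → K) := by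
      simp [iSup_genWeightSpace_eq_top']
    induction hm using LieSubmodule.iSup_induction' with
    | mem χ m hm => exact h χ m hm
    | zero => simp
    | add u v _ _ hu hv => simp only [map_add, hu, hv]
  have mem_lie : ∀ (Y : n) (χ : Weight K (K ⊗[k] n) (K ⊗[k] V)) (m : K ⊗[k] V),
      m ∈ genWeightSpace (K ⊗[k] V) (χ : (K ⊗[k] n) → K) →
      bc (π Y) m ∈ genWeightSpace (K ⊗[k] V) (χ : (K ⊗[k] n) → K) := by
    intro Y χ m hm
    have : ⁅(1 : K) ⊗ₜ[k] Y, m⁆ ∈ genWeightSpace (K ⊗[k] V) (χ : (K ⊗[k] n) → K) :=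
      (genWeightSpace (K ⊗[k] V) (χ : (K ⊗[k] n) → K)).lie_mem hm
    rwa [show ⁅(1 : K) ⊗ₜ[k] Y, m⁆ = bc (π Y) m from by rw [← htE Y]; rfl] at this
  have c1 : ∀ X Y : n, Commute (S X) (π Y) := by
    intro X Y
    have h : bc (S X * π Y) = bc (π Y * S X) := by
      rw [map_mul, map_mul]
      refine ext_top _ _ fun χ m hm => ?_
      have h1 : (bc (S X) * bc (π Y)) m = bc (S X) (bc (π Y) m) := rfl
      have h2 : (bc (π Y) * bc (S X)) m = bc (π Y) (bc (S X) m) := rfl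
      rw [h1, h2, scalar X χ _ (mem_lie Y χ m hm), scalar X χ m hm, map_smul]
    exact baseChange_end_inj K h
  have c2 : ∀ X Y : n, Commute (S X) (S Y) := by
    intro X Y
    have h : bc (S X * S Y) = bc (S Y * S X) := by
      rw [map_mul, map_mul]
      refine ext_top _ _ fun χ m hm => ?_
      have hmY : bc (S Y) m ∈ genWeightSpace (K ⊗[k] V) (χ : (K ⊗[k] n) → K) := by
        rw [scalar Y χ m hm]
        exact (genWeightSpace (K ⊗[k] V) (χ : (K ⊗[k] n) → K)).smul_mem _ hm
      have hmX : bc (S X) m ∈ genWeightSpace (K ⊗[k] V) (χ : (K ⊗[k] n) → K) := by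
        rw [scalar X χ m hm]
        exact (genWeightSpace (K ⊗[k] V) (χ : (K ⊗[k] n) → K)).smul_mem _ hm
      have h1 : (bc (S X) * bc (S Y)) m = bc (S X) (bc (S Y) m) := rfl
      have h2 : (bc (S Y) * bc (S X)) m = bc (S Y) (bc (S X) m) := rfl
      rw [h1, h2, scalar X χ _ hmY, scalar Y χ _ hmX, scalar X χ m hm, scalar Y χ m hm,
        smul_comm]
    exact baseChange_end_inj K h
  have c3 : ∀ X Y : n, S (X + Y) = S X + S Y := by
    intro X Y
    refine baseChange_end_inj K ?_
    rw [map_add]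
    refine ext_top _ _ fun χ m hm => ?_
    rw [LinearMap.add_apply, scalar (X + Y) χ m hm, scalar X χ m hm, scalar Y χ m hm,
      show (1 : K) ⊗ₜ[k] (X + Y) = (1 : K) ⊗ₜ[k] X + (1 : K) ⊗ₜ[k] Y from tmul_add .. ,
      map_add, add_smul]
  have c4 : ∀ (c : k) (X : n), S (c • X) = c • S X := by
    intro c X
    refine baseChange_end_inj K ?_
    rw [map_smul]
    refine ext_top _ _ fun χ m hm => ?_
    rw [LinearMap.smul_apply, scalar (c • X) χ m hm, scalar X χ m hm,
      show (1 : K) ⊗ₜ[k] (c • X) = (algebraMap k K c) • ((1 : K) ⊗ₜ[k] X) from by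
        rw [tmul_smul, algebraMap_smul],
      map_smul, smul_assoc, algebraMap_smul]
  have c5 : ∀ X Y : n, S ⁅X, Y⁆ = 0 := by
    intro X Y
    refine baseChange_end_inj K ?_
    rw [map_zero]
    refine ext_top _ _ fun χ m hm => ?_
    rw [scalar ⁅X, Y⁆ χ m hm,
      show (1 : K) ⊗ₜ[k] ⁅X, Y⁆ = ⁅(1 : K) ⊗ₜ[k] X, (1 : K) ⊗ₜ[k] Y⁆ from by
        rw [LieAlgebra.ExtendScalars.bracket_tmul, one_mul],
      LieModule.Weight.apply_lie, zero_smul, LinearMap.zero_apply]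
  exact ⟨c1, c2, c3, c4, c5⟩


/-- **Jordan decomposition of representations of nilpotent Lie algebras.** Let `n` be a
finite-dimensional nilpotent Lie algebra over a field `k` of characteristic zero and
`(π, V)` a finite-dimensional representation. If for each `X ∈ n`, `π X = S X + N X` is
the additive Jordan decomposition of `π X` (`S X` semisimple, `N X` nilpotent, and the two
parts commute), then `S` and `N` are Lie algebra homomorphisms `n → gl(V)` (i.e.
representations of `n`) and moreover `S X = 0` for all `X ∈ [n, n]`. -/
theorem jordan_parts_are_representations (k n V : Type) [Field k] [CharZero k]
    [AddCommGroup V] [Module k V] [FiniteDimensional k V]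
    [LieRing n] [LieAlgebra k n] [FiniteDimensional k n] [LieRing.IsNilpotent n]
    (π : n →ₗ⁅k⁆ Module.End k V) (S N : n → Module.End k V)
    (hSN : ∀ X, π X = S X + N X)
    (hS : ∀ X, (S X).IsSemisimple)
    (hN : ∀ X, IsNilpotent (N X))
    (hC : ∀ X, Commute (S X) (N X)) :
    (∃ πS : n →ₗ⁅k⁆ Module.End k V, ∀ X, πS X = S X) ∧
      (∃ πN : n →ₗ⁅k⁆ Module.End k V, ∀ X, πN X = N X) ∧
      ∀ X ∈ ⁅(⊤ : LieIdeal k n), (⊤ : LieIdeal k n)⁆, S X = 0 := by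
  have hNeq : ∀ X, N X = π X - S X := fun X => by rw [hSN X]; abel
  have hN' : ∀ X, IsNilpotent (π X - S X) := fun X => (hNeq X) ▸ hN X
  have hC' : ∀ X, Commute (π X) (S X) := fun X => by
    rw [hSN X]; exact ((Commute.refl (S X)).add_left (hC X).symm)
  obtain ⟨c1, c2, c3, c4, c5⟩ := key_facts k n V π S hS hN' hC'
  have hSbr : ∀ X Y : n, S ⁅X, Y⁆ = ⁅S X, S Y⁆ := by
    intro X Y
    rw [c5 X Y, Ring.lie_def, eq_comm, sub_eq_zero]
    exact (c2 X Y).eq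
  refine ⟨⟨⟨⟨⟨S, fun x y => c3 x y⟩, fun c x => c4 c x⟩, fun {x y} => hSbr x y⟩, fun X => rfl⟩, ?_, ?_⟩
  · refine ⟨⟨⟨⟨fun X => π X - S X, ?_⟩, ?_⟩, ?_⟩, fun X => (hNeq X).symm⟩
    · intro X Y; rw [map_add, c3]; abel
    · intro c X; simp only [RingHom.id_apply]; rw [map_smul, c4, smul_sub]
    · intro X Y
      simp only []
      have e1 := (c1 X Y).eq
      have e2 := (c1 Y X).eq
      have e3 := (c2 X Y).eq
      rw [LieHom.map_lie, c5, sub_zero, Ring.lie_def, Ring.lie_def]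
      simp only [sub_mul, mul_sub, e1, e2, e3]
      abel
  · intro X hX
    rw [← LieSubmodule.mem_toSubmodule, LieSubmodule.lieIdeal_oper_eq_linear_span'] at hX
    have hle : Submodule.span k {m : n | ∃ x ∈ (⊤ : LieIdeal k n), ∃ y ∈ (⊤ : LieIdeal k n),
        ⁅x, y⁆ = m} ≤ LinearMap.ker (⟨⟨S, fun x y => c3 x y⟩, fun c x => c4 c x⟩ : n →ₗ[k] Module.End k V) := by
      rw [Submodule.span_le]
      rintro - ⟨x, -, y, -, rfl⟩
      exact c5 x y
    exact hle hX
end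

section
/- Let n be a finite-dimensional nilpotent Lie algebra over a field k of characteristic zero whose center z(n) is contained in the derived algebra [n, n], and let (π, V) be a finite-dimensional representation of n. Then π is injective (faithful) if and only if its nilpotent part π_N (defined by π_N(X) = the nilpotent part of the additive Jordan decomposition of π(X)) is injective. -/
attribute [local instance 100] LieRing.ofAssociativeRing

open Polynomial Module LinearMap

section Helpers

variable {k : Type} [Field k] [CharZero k]

lemma my_commute_aeval {A : Type*} [Ring A] [Algebra k A] {a b : A} (h : Commute a b)
    (q : k[X]) : Commute a (aeval b q) := by
  induction q using Polynomial.induction_on with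
  | C c => simpa using Algebra.commute_algebraMap_right c a
  | add p q hp hq => simpa [map_add] using hp.add_right hq
  | monomial m c hc =>
      have : (C c * X ^ (m + 1)) = (C c * X ^ m) * X := by ring
      rw [this, map_mul, aeval_X]
      exact hc.mul_right h

lemma my_commute_of_mem_adjoin {A : Type*} [Ring A] [Algebra k A] {a f b : A}
    (h : Commute a f) (hb : b ∈ Algebra.adjoin k {f}) : Commute a b := by
  rw [Algebra.adjoin_singleton_eq_range_aeval] at hb
  obtain ⟨q, rfl⟩ := hb
  exact my_commute_aeval h q

variable {M : Type*} [AddCommGroup M] [Module k M] [FiniteDimensional k M]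

/-- Uniqueness of the Jordan–Chevalley decomposition, given one decomposition whose parts lie
in the adjoin of the endomorphism. -/
lemma my_jordan_unique {f s nn s' n' : Module.End k M} (hf : f = s + nn) (hs : s.IsSemisimple)
    (hn : IsNilpotent nn) (hc : Commute s nn)
    (hs'mem : s' ∈ Algebra.adjoin k {f}) (hn'mem : n' ∈ Algebra.adjoin k {f})
    (hf' : f = s' + n') (hs' : s'.IsSemisimple) (hn' : IsNilpotent n') :
    s = s' ∧ nn = n' := by
  have hsf : Commute s f := by rw [hf]; exact (Commute.refl s).add_right hc
  have hnf : Commute nn f := by rw [hf]; exact hc.symm.add_right (Commute.refl nn)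
  have hss' : Commute s s' := my_commute_of_mem_adjoin hsf hs'mem
  have hnn' : Commute nn n' := my_commute_of_mem_adjoin hnf hn'mem
  have hkey : s - s' = n' - nn := by
    have : s + nn = s' + n' := by rw [← hf, ← hf']
    linear_combination (norm := noncomm_ring) this
  have hnilp : IsNilpotent (s - s') := by
    rw [hkey]; exact (hnn'.symm).isNilpotent_sub hn' hn
  have hss : (s - s').IsSemisimple :=
    Module.End.IsSemisimple.sub_of_commute hss' hs hs'
  have h0 : s - s' = 0 := Module.End.eq_zero_of_isNilpotent_isSemisimple hnilp hss
  have h1 : s = s' := by rwa [sub_eq_zero] at h0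
  refine ⟨h1, ?_⟩
  have := hf.symm.trans hf'
  rw [h1] at this
  exact add_left_cancel this

lemma my_aeval_apply_mem {f : Module.End k M} {p : Submodule k M}
    (h : ∀ x ∈ p, f x ∈ p) (q : k[X]) : ∀ x ∈ p, aeval f q x ∈ p := by
  induction q using Polynomial.induction_on with
  | C c => intro x hx; simpa [Module.algebraMap_end_apply] using p.smul_mem c hx
  | add q r hq hr =>
      intro x hx
      simpa [map_add, LinearMap.add_apply] using p.add_mem (hq x hx) (hr x hx)
  | monomial m c hm =>
      intro x hx
      have h1 : (C c * X ^ (m + 1)) = (C c * X ^ m) * X := by ring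
      rw [h1, map_mul, aeval_X, Module.End.mul_apply]
      exact hm (f x) (h x hx)

lemma my_aeval_mulLeft {A : Type*} [Ring A] [Algebra k A] (z : A) (q : k[X]) :
    aeval (LinearMap.mulLeft k z) q = LinearMap.mulLeft k (aeval z q) := by
  induction q using Polynomial.induction_on with
  | C c =>
      ext w
      simp [Module.algebraMap_end_apply, Algebra.algebraMap_eq_smul_one, smul_mul_assoc]
  | add q r hq hr =>
      ext w
      simp [map_add, hq, hr, add_mul]
  | monomial m c hm =>
      have h1 : (C c * X ^ (m + 1)) = (C c * X ^ m) * X := by ring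
      have h2 : aeval (LinearMap.mulLeft k z) ((C c * X ^ m) * X)
          = aeval (LinearMap.mulLeft k z) (C c * X ^ m) * LinearMap.mulLeft k z := by
        rw [map_mul, aeval_X]
      have h3 : aeval z ((C c * X ^ m) * X) = aeval z (C c * X ^ m) * z := by
        rw [map_mul, aeval_X]
      rw [h1, h2, h3, hm]
      ext w
      simp [Module.End.mul_apply, mul_assoc]

lemma my_aeval_mulRight {A : Type*} [Ring A] [Algebra k A] (z : A) (q : k[X]) :
    aeval (LinearMap.mulRight k z) q = LinearMap.mulRight k (aeval z q) := by
  induction q using Polynomial.induction_on with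
  | C c =>
      ext w
      simp [Module.algebraMap_end_apply, Algebra.algebraMap_eq_smul_one, mul_smul_comm]
  | add q r hq hr =>
      ext w
      simp [map_add, hq, hr, mul_add]
  | monomial m c hm =>
      have h1 : (C c * X ^ (m + 1)) = (C c * X ^ m) * X := by ring
      have h2 : aeval (LinearMap.mulRight k z) ((C c * X ^ m) * X)
          = aeval (LinearMap.mulRight k z) (C c * X ^ m) * LinearMap.mulRight k z := by
        rw [map_mul, aeval_X]
      have h3 : aeval z ((C c * X ^ m) * X) = aeval z (C c * X ^ m) * z := by
        rw [map_mul, aeval_X]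
      have h4 : aeval z (C c * X ^ m) * z = z * aeval z (C c * X ^ m) :=
        ((my_commute_aeval (Commute.refl z) (C c * X ^ m)).symm).eq
      rw [h1, h2, h3, hm, h4]
      ext w
      simp [Module.End.mul_apply, mul_assoc]

/-- If `z` is a semisimple endomorphism then `ad z` on `End k M` is semisimple. -/
lemma my_ad_isSemisimple {z : Module.End k M} (hz : z.IsSemisimple) :
    (LieAlgebra.ad k (Module.End k M) z).IsSemisimple := by
  have hsq : Squarefree (minpoly k z) := hz.minpoly_squarefree
  have hL : Module.End.IsSemisimple (LinearMap.mulLeft k z : Module.End k (Module.End k M)) := by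
    apply Module.End.isSemisimple_of_squarefree_aeval_eq_zero hsq
    rw [my_aeval_mulLeft, minpoly.aeval]
    ext w; simp
  have hR : Module.End.IsSemisimple
      (LinearMap.mulRight k z : Module.End k (Module.End k M)) := by
    apply Module.End.isSemisimple_of_squarefree_aeval_eq_zero hsq
    rw [my_aeval_mulRight, minpoly.aeval]
    ext w; simp
  have had : LieAlgebra.ad k (Module.End k M) z
      = LinearMap.mulLeft k z - LinearMap.mulRight k z := by
    have := LieAlgebra.ad_eq_lmul_left_sub_lmul_right (R := k) (Module.End k M)
    exact congrFun this z
  rw [had]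
  exact Module.End.IsSemisimple.sub_of_commute (LinearMap.commute_mulLeft_right z z) hL hR

end Helpers

section Main

variable {k : Type} [Field k] [CharZero k]
variable {V : Type} [AddCommGroup V] [Module k V] [FiniteDimensional k V]

/-- A semisimple endomorphism all of whose "polynomial traces" vanish is zero. -/
lemma my_semisimple_eq_zero_of_traces {z : Module.End k V} (hzss : z.IsSemisimple)
    (htr : ∀ q : k[X], LinearMap.trace k V (aeval z q * z) = 0) : z = 0 := by
  by_contra hne
  have hsq : Squarefree (minpoly k z) := hzss.minpoly_squarefree
  obtain ⟨r, hXr, hdvd⟩ : ∃ r, IsCoprime (X : k[X]) r ∧ minpoly k z ∣ X * r := by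
    by_cases hd : (X : k[X]) ∣ minpoly k z
    · obtain ⟨r, hr⟩ := hd
      refine ⟨r, Polynomial.irreducible_X.coprime_iff_not_dvd.mpr ?_, by rw [hr]⟩
      intro hX2
      obtain ⟨t, ht⟩ := hX2
      exact Polynomial.not_isUnit_X (hsq X ⟨t, by rw [hr, ht]; ring⟩)
    · exact ⟨minpoly k z, Polynomial.irreducible_X.coprime_iff_not_dvd.mpr hd,
        Dvd.intro_left X rfl⟩
  have hXr0 : aeval z (X * r) = 0 := by
    obtain ⟨t, ht⟩ := hdvd
    rw [ht, map_mul, minpoly.aeval, zero_mul]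
  obtain ⟨a, b, hab⟩ := hXr
  obtain ⟨e, he⟩ : ∃ e : Module.End k V, e = aeval z (a * X) := ⟨_, rfl⟩
  have he2 : e * e = e := by
    have h1 : (a * X) * (a * X) - (a * X) = -((a * b) * (X * r)) := by
      linear_combination (a * X) * hab
    have h2 : e * e - e = 0 := by
      rw [he, ← map_mul, ← map_sub, h1, map_neg, map_mul, hXr0, mul_zero, neg_zero]
    rwa [sub_eq_zero] at h2
  have hee : e = aeval z a * z := by rw [he, map_mul, aeval_X]
  have htre : LinearMap.trace k V e = 0 := by rw [hee]; exact htr a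
  have hene : e ≠ 0 := by
    intro h0
    apply hne
    have h2 : (X : k[X]) = (a * X) * X + b * (X * r) := by linear_combination (-X) * hab
    have h3 : z = aeval z (a * X) * z + aeval z (b * (X * r)) := by
      calc z = aeval z X := (aeval_X z).symm
        _ = aeval z ((a * X) * X + b * (X * r)) := by rw [← h2]
        _ = aeval z (a * X) * z + aeval z (b * (X * r)) := by
            rw [map_add, map_mul, aeval_X]
    rw [← he, h0, zero_mul, zero_add, map_mul, hXr0, mul_zero] at h3
    exact h3
  -- `e` is a nonzero idempotent of trace zero: contradiction with char zero
  have hproj : LinearMap.IsProj (LinearMap.range e) e := by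
    refine ⟨fun x ↦ LinearMap.mem_range_self e x, ?_⟩
    rintro x ⟨y, rfl⟩
    have := LinearMap.congr_fun he2 y
    simpa [Module.End.mul_apply] using this
  have htr2 : LinearMap.trace k V e = (Module.finrank k (LinearMap.range e) : k) := hproj.trace
  rw [htre] at htr2
  have h4 : Module.finrank k (LinearMap.range e) = 0 := by exact_mod_cast htr2.symm
  have h5 : LinearMap.range e = ⊥ := Submodule.finrank_eq_zero.mp h4
  exact hene (LinearMap.range_eq_bot.mp h5)

variable {n : Type} [LieRing n] [LieAlgebra k n] [LieModule.IsNilpotent n n]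

/-- The semisimple parts commute with the whole image of the representation. -/
lemma my_S_commutes (π : n →ₗ⁅k⁆ Module.End k V) (S N : n → Module.End k V)
    (hSN : ∀ X, π X = S X + N X) (hS : ∀ X, (S X).IsSemisimple)
    (hN : ∀ X, IsNilpotent (N X)) (hC : ∀ X, Commute (S X) (N X)) :
    ∀ X Z : n, Commute (S X) (π Z) := by
  intro X Z
  set B : Module.End k (Module.End k V) := LieAlgebra.ad k (Module.End k V) (π X) with hB
  have hdecomp : B = LieAlgebra.ad k (Module.End k V) (S X)
      + LieAlgebra.ad k (Module.End k V) (N X) := by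
    rw [hB, hSN X, map_add]
  have hads : (LieAlgebra.ad k (Module.End k V) (S X)).IsSemisimple :=
    my_ad_isSemisimple (hS X)
  have hadn : IsNilpotent (LieAlgebra.ad k (Module.End k V) (N X)) :=
    LieAlgebra.ad_nilpotent_of_nilpotent (R := k) (hN X)
  have hcadj : Commute (LieAlgebra.ad k (Module.End k V) (S X))
      (LieAlgebra.ad k (Module.End k V) (N X)) := by
    rw [commute_iff_lie_eq, ← LieHom.map_lie, commute_iff_lie_eq.mp (hC X), map_zero]
  obtain ⟨n', hn'mem, s', hs'mem, hn', hs', hBe⟩ :=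
    Module.End.exists_isNilpotent_isSemisimple (f := B)
  have huniq := my_jordan_unique hdecomp hads hadn hcadj hs'mem hn'mem
    (by rw [hBe, add_comm]) hs' hn'
  have hmemS : LieAlgebra.ad k (Module.End k V) (S X) ∈ Algebra.adjoin k {B} := by
    rw [huniq.1]; exact hs'mem
  set W : Submodule k (Module.End k V) := LinearMap.range π.toLinearMap with hW
  have hπmem : ∀ Y : n, π Y ∈ W := fun Y ↦ ⟨Y, rfl⟩
  have hWB : ∀ w ∈ W, B w ∈ W := by
    rintro w ⟨Zw, rfl⟩
    refine ⟨⁅X, Zw⁆, ?_⟩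
    show π ⁅X, Zw⁆ = B (π Zw)
    rw [hB, LieAlgebra.ad_apply, LieHom.map_lie]
  have hWS : ∀ w ∈ W, LieAlgebra.ad k (Module.End k V) (S X) w ∈ W := by
    rw [Algebra.adjoin_singleton_eq_range_aeval] at hmemS
    obtain ⟨q, hq⟩ := hmemS
    intro w hw
    rw [← hq]
    exact my_aeval_apply_mem hWB q w hw
  have hWN : ∀ w ∈ W, LieAlgebra.ad k (Module.End k V) (N X) w ∈ W := by
    intro w hw
    have h6 : LieAlgebra.ad k (Module.End k V) (N X) w
        = B w - LieAlgebra.ad k (Module.End k V) (S X) w := by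
      rw [hdecomp]; simp
    rw [h6]
    exact W.sub_mem (hWB w hw) (hWS w hw)
  have hrB : IsNilpotent (B.restrict hWB) := by
    obtain ⟨m, hm⟩ := LieModule.isNilpotent_toEnd_of_isNilpotent k n n X
    refine ⟨m, ?_⟩
    rw [Module.End.pow_restrict]
    have h7 : ∀ Zz : n, B (π Zz) = π (LieModule.toEnd k n n X Zz) := by
      intro Zz
      rw [hB, LieAlgebra.ad_apply, LieModule.toEnd_apply_apply, LieHom.map_lie]
    have key : ∀ (j : ℕ) (Zz : n), (B ^ j) (π Zz) = π ((LieModule.toEnd k n n X ^ j) Zz) := by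
      intro j
      induction j with
      | zero => simp
      | succ j ih =>
          intro Zz
          rw [pow_succ', pow_succ', Module.End.mul_apply, Module.End.mul_apply, ih, h7]
    refine LinearMap.ext ?_
    rintro ⟨w, hw⟩
    obtain ⟨Zw, rfl⟩ := hw
    refine Subtype.ext ?_
    have h8 := key m Zw
    rw [hm] at h8
    simpa [LinearMap.restrict_coe_apply] using h8
  have hrsum : B.restrict hWB = (LieAlgebra.ad k (Module.End k V) (S X)).restrict hWS
      + (LieAlgebra.ad k (Module.End k V) (N X)).restrict hWN := by
    refine LinearMap.ext ?_
    rintro ⟨w, hw⟩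
    refine Subtype.ext ?_
    simp only [LinearMap.restrict_coe_apply, LinearMap.add_apply, Submodule.coe_add, hdecomp]
  have hrc : Commute ((LieAlgebra.ad k (Module.End k V) (S X)).restrict hWS)
      ((LieAlgebra.ad k (Module.End k V) (N X)).restrict hWN) := by
    refine LinearMap.ext ?_
    rintro ⟨w, hw⟩
    refine Subtype.ext ?_
    have h10 := LinearMap.congr_fun hcadj.eq w
    simp only [Module.End.mul_apply] at h10 ⊢
    simpa only [LinearMap.restrict_coe_apply] using h10
  have hrNnil : IsNilpotent ((LieAlgebra.ad k (Module.End k V) (N X)).restrict hWN) := by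
    obtain ⟨m2, hm2⟩ := hadn
    refine ⟨m2, ?_⟩
    rw [Module.End.pow_restrict]
    refine LinearMap.ext ?_
    rintro ⟨w, hw⟩
    refine Subtype.ext ?_
    simp [LinearMap.restrict_coe_apply, hm2]
  have hcomm2 : Commute (B.restrict hWB)
      ((LieAlgebra.ad k (Module.End k V) (N X)).restrict hWN) := by
    rw [hrsum]
    exact hrc.add_left (Commute.refl _)
  have hrSeq : (LieAlgebra.ad k (Module.End k V) (S X)).restrict hWS
      = B.restrict hWB - (LieAlgebra.ad k (Module.End k V) (N X)).restrict hWN :=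
    eq_sub_of_add_eq hrsum.symm
  have hrSnil : IsNilpotent ((LieAlgebra.ad k (Module.End k V) (S X)).restrict hWS) := by
    rw [hrSeq]
    exact hcomm2.isNilpotent_sub hrB hrNnil
  have hWSmem : W ∈ (LieAlgebra.ad k (Module.End k V) (S X)).invtSubmodule :=
    (Module.End.mem_invtSubmodule _).mpr fun w hw ↦ Submodule.mem_comap.mpr (hWS w hw)
  have hrSss : Module.End.IsSemisimple
      ((LieAlgebra.ad k (Module.End k V) (S X)).restrict hWS) := hads.restrict hWSmem
  have hrS0 := Module.End.eq_zero_of_isNilpotent_isSemisimple hrSnil hrSss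
  have h11 : LieAlgebra.ad k (Module.End k V) (S X) (π Z) = 0 := by
    have h12 := LinearMap.congr_fun hrS0 ⟨π Z, hπmem Z⟩
    have h13 := congrArg Subtype.val h12
    simpa [LinearMap.restrict_coe_apply] using h13
  rw [LieAlgebra.ad_apply] at h11
  exact commute_iff_lie_eq.mpr h11

end Main

/-- Let `n` be a finite-dimensional nilpotent Lie algebra over a field `k` of
characteristic zero whose center is contained in the derived algebra `[n, n]`, and let
`(π, V)` be a finite-dimensional representation of `n`. Writing `π X = S X + N X` for the
additive Jordan decomposition of each `π X` (`S X` semisimple, `N X` nilpotent,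
commuting), the representation `π` is faithful if and only if its nilpotent part `N` is
injective. -/
theorem faithful_iff_nilpotentPart_faithful (k n V : Type) [Field k] [CharZero k]
    [AddCommGroup V] [Module k V] [FiniteDimensional k V]
    [LieRing n] [LieAlgebra k n] [FiniteDimensional k n] [LieModule.IsNilpotent n n]
    (hz : LieAlgebra.center k n ≤ ⁅(⊤ : LieIdeal k n), (⊤ : LieIdeal k n)⁆)
    (π : n →ₗ⁅k⁆ Module.End k V) (S N : n → Module.End k V)
    (hSN : ∀ X, π X = S X + N X)
    (hS : ∀ X, (S X).IsSemisimple)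
    (hN : ∀ X, IsNilpotent (N X))
    (hC : ∀ X, Commute (S X) (N X)) :
    Function.Injective π ↔ Function.Injective N := by
  have hadj : ∀ Y : n, S Y ∈ Algebra.adjoin k {π Y} ∧ N Y ∈ Algebra.adjoin k {π Y} := by
    intro Y
    obtain ⟨n', hn'mem, s', hs'mem, hn', hs', hfe⟩ :=
      Module.End.exists_isNilpotent_isSemisimple (f := π Y)
    have huniq := my_jordan_unique (hSN Y) (hS Y) (hN Y) (hC Y) hs'mem hn'mem
      (by rw [hfe, add_comm]) hs' hn'
    rw [huniq.1, huniq.2]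
    exact ⟨hs'mem, hn'mem⟩
  have hScomm := my_S_commutes π S N hSN hS hN hC
  constructor
  · -- `π` injective → `N` injective
    intro hinj A B hNAB
    have hπz : π (A - B) = S A - S B := by
      rw [map_sub, hSN A, hSN B, hNAB]
      abel
    have hcss : Commute (S A) (S B) :=
      my_commute_of_mem_adjoin (hScomm A B) (hadj B).1
    have hzss : (π (A - B)).IsSemisimple := by
      rw [hπz]
      exact Module.End.IsSemisimple.sub_of_commute hcss (hS A) (hS B)
    have hzcomm : ∀ Zc : n, Commute (π (A - B)) (π Zc) := by
      intro Zc
      rw [hπz]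
      exact (hScomm A Zc).sub_left (hScomm B Zc)
    have hcen : (A - B) ∈ LieAlgebra.center k n := by
      rw [LieModule.mem_maxTrivSubmodule]
      intro W
      apply hinj
      rw [LieHom.map_lie, map_zero, Ring.lie_def]
      exact sub_eq_zero.mpr ((hzcomm W).symm.eq)
    have hmem : (A - B) ∈ ⁅(⊤ : LieIdeal k n), (⊤ : LieIdeal k n)⁆ := hz hcen
    have htr : ∀ q : k[X], LinearMap.trace k V (aeval (π (A - B)) q * π (A - B)) = 0 := by
      intro q
      have hspan := LieSubmodule.lieIdeal_oper_eq_linear_span' (R := k) (L := n) (M := n)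
        (I := ⊤) (N := ⊤)
      have hmem2 : (A - B) ∈ Submodule.span k
          {m | ∃ x ∈ (⊤ : LieIdeal k n), ∃ nn ∈ (⊤ : LieIdeal k n), ⁅x, nn⁆ = m} := by
        rw [← hspan]
        exact hmem
      have main : ∀ u ∈ Submodule.span k
          {m | ∃ x ∈ (⊤ : LieIdeal k n), ∃ nn ∈ (⊤ : LieIdeal k n), ⁅x, nn⁆ = m},
          LinearMap.trace k V (aeval (π (A - B)) q * π u) = 0 := by
        intro u hu
        induction hu using Submodule.span_induction with
        | mem u hu =>
            obtain ⟨x, -, y, -, rfl⟩ := hu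
            have hcb : Commute (aeval (π (A - B)) q) (π y) :=
              (my_commute_aeval ((hzcomm y).symm) q).symm
            rw [LieHom.map_lie, Ring.lie_def, mul_sub, map_sub]
            have e1 : aeval (π (A - B)) q * (π y * π x)
                = π y * (aeval (π (A - B)) q * π x) := by
              rw [← mul_assoc, hcb.eq, mul_assoc]
            rw [e1, LinearMap.trace_mul_comm k (π y) (aeval (π (A - B)) q * π x),
              ← mul_assoc, sub_self]
        | zero => simp
        | add u v hu hv hu' hv' => rw [map_add, mul_add, map_add, hu', hv', add_zero]
        | smul c u hu hu' => rw [map_smul, mul_smul_comm, map_smul, hu', smul_zero]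
      exact main (A - B) hmem2
    have hz0 : π (A - B) = 0 := my_semisimple_eq_zero_of_traces hzss htr
    have h14 : A - B = 0 := hinj (by rw [hz0, map_zero])
    exact sub_eq_zero.mp h14
  · -- `N` injective → `π` injective
    intro hNinj
    have key : ∀ D : n, π D = 0 → N D = 0 := by
      intro D hD
      have h1 : S D = -N D := by
        have h2 := hSN D
        rw [hD] at h2
        exact eq_neg_of_add_eq_zero_left h2.symm
      have h2 : IsNilpotent (S D) := by rw [h1]; exact (hN D).neg
      have h3 : S D = 0 := Module.End.eq_zero_of_isNilpotent_isSemisimple h2 (hS D)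
      have h4 := hSN D
      rw [hD, h3, zero_add] at h4
      exact h4.symm
    intro A B hAB
    have hD : π (A - B) = 0 := by rw [map_sub, hAB, sub_self]
    have hN0 : N 0 = 0 := key 0 π.map_zero
    have h15 : A - B = 0 := hNinj ((key _ hD).trans hN0.symm)
    exact sub_eq_zero.mp h15
end

section
/- Let k be a field of characteristic zero, let p ∈ k[t] be a monic polynomial of degree d with companion matrix P, and let a, b be positive integers with ab ≥ d. Define A ∈ M_{a×d}(k) by A_{ij} = 1 if j = d − (a − i)b and A_{ij} = 0 otherwise, and define B ∈ M_{d×b}(k) by B_{ij} = 1 if i = j and B_{ij} = 0 otherwise. Then the linear map β_{A,B} : k[P] → M_{a×b}(k) given by β_{A,B}(q(P)) = A·q(P)·B is injective, where k[P] is the subalgebra of M_{d×d}(k) generated by P. -/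
open Polynomial

/-- The companion matrix of a monic polynomial `p = a₀ + a₁ t + ⋯ + a_{d-1} t^{d-1} + t^d`
of degree `d`: the `d × d` matrix with `1`s on the subdiagonal, last column
`(-a₀, …, -a_{d-1})ᵀ`, and zeros elsewhere (entries indexed by `Fin d`). -/
def companionMatrix (k : Type) [Field k] (d : ℕ) (p : Polynomial k) :
    Matrix (Fin d) (Fin d) k :=
  Matrix.of fun i j =>
    if (j : ℕ) = d - 1 then -p.coeff i else if (i : ℕ) = (j : ℕ) + 1 then 1 else 0


section Helpers

variable {k : Type} [Field k] {d : ℕ} {p : Polynomial k}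

lemma pow_col0 (hd : 0 < d) {m : ℕ} (hm : m < d) (i : Fin d) :
    (companionMatrix k d p ^ m) i ⟨0, hd⟩ = if (i : ℕ) = m then 1 else 0 := by
  induction m generalizing i with
  | zero => simp [Matrix.one_apply, Fin.ext_iff]
  | succ n ih =>
    have hn : n < d := Nat.lt_of_succ_lt hm
    rw [pow_succ', Matrix.mul_apply]
    have h1 : ∀ j : Fin d, (companionMatrix k d p ^ n) j ⟨0, hd⟩
        = if j = (⟨n, hn⟩ : Fin d) then 1 else 0 := by
      intro j; rw [ih hn]; simp [Fin.ext_iff]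
    simp only [h1, mul_ite, mul_one, mul_zero]
    rw [Finset.sum_ite_eq' Finset.univ (⟨n, hn⟩ : Fin d)]
    have hne : n ≠ d - 1 := by omega
    simp [companionMatrix, hne]

lemma aeval_col0 (hd : 0 < d) {q : Polynomial k} (hq : q.natDegree < d) (i : Fin d) :
    (aeval (companionMatrix k d p) q) i ⟨0, hd⟩ = q.coeff i := by
  rw [aeval_eq_sum_range' hq, Matrix.sum_apply]
  have h1 : ∀ m ∈ Finset.range d, (q.coeff m • companionMatrix k d p ^ m) i ⟨0, hd⟩
      = if (i : ℕ) = m then q.coeff m else 0 := by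
    intro m hm
    rw [Matrix.smul_apply, pow_col0 hd (Finset.mem_range.mp hm)]
    simp [smul_ite]
  rw [Finset.sum_congr rfl h1, Finset.sum_ite_eq]
  simp [i.is_lt]

lemma entry_via_col0 (hd : 0 < d) (M : Matrix (Fin d) (Fin d) k) {c : ℕ} (hc : c < d)
    (i : Fin d) :
    (M * companionMatrix k d p ^ c) i ⟨0, hd⟩ = M i ⟨c, hc⟩ := by
  rw [Matrix.mul_apply]
  have h1 : ∀ j : Fin d, (companionMatrix k d p ^ c) j ⟨0, hd⟩
      = if j = (⟨c, hc⟩ : Fin d) then 1 else 0 := by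
    intro j; rw [pow_col0 hd hc]; simp [Fin.ext_iff]
  simp only [h1, mul_ite, mul_one, mul_zero]
  rw [Finset.sum_ite_eq' Finset.univ]
  simp

lemma pP0 (hd : 0 < d) (hp : p.Monic) (hdeg : p.natDegree = d) (i : Fin d) :
    (aeval (companionMatrix k d p) p) i ⟨0, hd⟩ = 0 := by
  have hdegsub : (p - X ^ d).natDegree < d := by
    by_cases h0 : p - X ^ d = 0
    · rw [h0]; simpa using hd
    · have h1 := Polynomial.degree_sub_lt
        (by rw [degree_X_pow, Polynomial.degree_eq_natDegree hp.ne_zero, hdeg])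
        hp.ne_zero (by rw [hp.leadingCoeff, Polynomial.leadingCoeff_X_pow])
      rw [Polynomial.degree_eq_natDegree hp.ne_zero, hdeg] at h1
      rw [Polynomial.natDegree_lt_iff_degree_lt h0]
      exact_mod_cast h1
  have hXd : (aeval (companionMatrix k d p) (X ^ d : Polynomial k)) i ⟨0, hd⟩
      = -p.coeff i := by
    have hXsplit : (X ^ d : Polynomial k) = X ^ 1 * X ^ (d - 1) := by
      rw [← pow_add]; congr 1; omega
    rw [hXsplit, map_mul, aeval_X_pow, aeval_X_pow, pow_one,
      entry_via_col0 hd _ (Nat.sub_lt hd one_pos) i]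
    have hdd : (d - 1 : ℕ) = d - 1 := rfl
    simp [companionMatrix]
  have hPsplit : aeval (companionMatrix k d p) p
      = aeval (companionMatrix k d p) (p - X ^ d) + aeval (companionMatrix k d p) ((X : Polynomial k) ^ d) := by
    rw [← map_add]; congr 1; ring
  rw [hPsplit, Matrix.add_apply, aeval_col0 hd hdegsub i, hXd]
  have : (p - X ^ d).coeff i = p.coeff i := by
    rw [Polynomial.coeff_sub, Polynomial.coeff_X_pow]
    have : (i : ℕ) ≠ d := by omega
    simp [this]
  rw [this]; ring

lemma pP_zero (hd : 0 < d) (hp : p.Monic) (hdeg : p.natDegree = d) :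
    aeval (companionMatrix k d p) p = 0 := by
  set P := companionMatrix k d p with hP
  ext i j
  have h1 : (aeval P p * P ^ (j : ℕ)) i ⟨0, hd⟩ = (aeval P p) i j := by
    rw [entry_via_col0 hd _ j.isLt i]
  have hcomm : aeval P p * P ^ (j : ℕ) = P ^ (j : ℕ) * aeval P p := by
    rw [← Polynomial.aeval_X_pow (R := k) P (n := (j : ℕ)), ← map_mul, ← map_mul, mul_comm]
  rw [← h1, hcomm, Matrix.mul_apply]
  simp [hP, pP0 hd hp hdeg]

lemma key_lemma (k : Type) [Field k] (d a b : ℕ) (hd : 0 < d)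
    (ha : 0 < a) (hb : 0 < b) (hab : d ≤ a * b) (p : Polynomial k)
    (A : Matrix (Fin a) (Fin d) k) (B : Matrix (Fin d) (Fin b) k)
    (hA : ∀ (i : Fin a) (j : Fin d),
      A i j = if (j : ℤ) + 1 = (d : ℤ) - ((a : ℤ) - 1 - (i : ℤ)) * (b : ℤ) then 1 else 0)
    (hB : ∀ (i : Fin d) (j : Fin b), B i j = if (i : ℕ) = (j : ℕ) then 1 else 0)
    (r : Polynomial k) (hrd : r.natDegree < d)
    (h0 : A * aeval (companionMatrix k d p) r * B = 0) : r = 0 := by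
  set P := companionMatrix k d p with hP
  by_contra hr
  set e := r.natDegree with he'
  set m := d - 1 - e with hm'
  set j := m / b with hj'
  set c := m % b with hc'
  obtain ⟨t, ht⟩ : ∃ t, j * b = t := ⟨_, rfl⟩
  have hjm : t + c = m := by rw [← ht, hj', hc', mul_comm]; exact Nat.div_add_mod m b
  have hc : c < b := Nat.mod_lt _ hb
  have he : e + m = d - 1 := by omega
  have hj_lt : j < a := by
    have h1 : j * b < a * b := by rw [ht]; omega
    exact Nat.lt_of_mul_lt_mul_right h1
  set rr := e + c with hrr'
  have hrr : rr < d := by omega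
  have hcd : c < d := by omega
  set i0 : Fin a := ⟨a - 1 - j, by rw [Nat.sub_sub]; exact Nat.sub_lt ha (Nat.lt_of_lt_of_le Nat.one_pos (Nat.le_add_right 1 j))⟩ with hi0
  set c0 : Fin b := ⟨c, hc⟩ with hc0
  have hArow : ∀ s : Fin d, A i0 s = if s = (⟨rr, hrr⟩ : Fin d) then 1 else 0 := by
    intro s
    rw [hA]
    have h1 : ((i0 : ℕ) : ℤ) = (a : ℤ) - 1 - j := by
      simp only [hi0]; omega
    have h2 : ((s : ℤ) + 1 = (d : ℤ) - ((a : ℤ) - 1 - ((i0 : ℕ) : ℤ)) * b)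
        ↔ (s = (⟨rr, hrr⟩ : Fin d)) := by
      rw [h1]
      have h3 : ((a : ℤ) - 1 - ((a : ℤ) - 1 - j)) * b = ((j * b : ℕ) : ℤ) := by
        push_cast; ring
      rw [h3, ht, Fin.ext_iff]
      have hs := s.isLt
      simp only [Fin.val_mk]
      omega
    simp only [h2]
  have hBcol : ∀ u : Fin d, B u c0 = if u = (⟨c, hcd⟩ : Fin d) then 1 else 0 := by
    intro u
    rw [hB]
    simp [Fin.ext_iff, hc0]
  have hentry : (A * aeval P r * B) i0 c0
      = (aeval P r) ⟨rr, hrr⟩ ⟨c, hcd⟩ := by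
    rw [Matrix.mul_apply]
    simp only [hBcol, mul_ite, mul_one, mul_zero]
    rw [Finset.sum_ite_eq' Finset.univ]
    simp only [Finset.mem_univ, if_true]
    rw [Matrix.mul_apply]
    simp only [hArow, ite_mul, one_mul, zero_mul]
    rw [Finset.sum_ite_eq' Finset.univ]
    simp
  have hdeg2 : (r * X ^ c).natDegree < d := by
    have := Polynomial.natDegree_mul_le (p := r) (q := (X : Polynomial k) ^ c)
    rw [Polynomial.natDegree_X_pow] at this
    omega
  have hval : (aeval P r) ⟨rr, hrr⟩ ⟨c, hcd⟩ = r.coeff e := by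
    rw [← entry_via_col0 (p := p) hd (aeval P r) hcd, ← Polynomial.aeval_X_pow (R := k) P (n := c),
      ← map_mul, aeval_col0 hd hdeg2]
    rw [Polynomial.coeff_mul_X_pow']
    simp only [Fin.val_mk]
    have : c ≤ rr := by omega
    rw [if_pos this]
    congr 1
    omega
  rw [h0] at hentry
  rw [hval] at hentry
  have : r.coeff e ≠ 0 := by
    rw [he']
    exact Polynomial.leadingCoeff_ne_zero.mpr hr
  exact this (by rw [← hentry]; simp)

end Helpers

/-- Let `P` be the companion matrix of a monic polynomial `p` of degree `d` over a field
`k` of characteristic zero, and let `a, b` be positive integers with `a * b ≥ d`. With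
`A ∈ M_{a×d}(k)` given by `A i j = 1` iff `j = d - (a - i) * b` (1-indexed; below in
0-indexed form) and `B ∈ M_{d×b}(k)` given by `B i j = 1` iff `i = j`, the linear map
`β_{A,B} : k[P] → M_{a×b}(k)`, `q(P) ↦ A * q(P) * B`, is injective, where `k[P]` is the
subalgebra of `M_{d×d}(k)` generated by `P`. -/
theorem beta_injective (k : Type) [Field k] [CharZero k] (d a b : ℕ) (hd : 0 < d)
    (ha : 0 < a) (hb : 0 < b) (hab : d ≤ a * b)
    (p : Polynomial k) (hp : p.Monic) (hdeg : p.natDegree = d)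
    (A : Matrix (Fin a) (Fin d) k) (B : Matrix (Fin d) (Fin b) k)
    (hA : ∀ (i : Fin a) (j : Fin d),
      A i j = if (j : ℤ) + 1 = (d : ℤ) - ((a : ℤ) - 1 - (i : ℤ)) * (b : ℤ) then 1 else 0)
    (hB : ∀ (i : Fin d) (j : Fin b), B i j = if (i : ℕ) = (j : ℕ) then 1 else 0) :
    Function.Injective
      (fun M : Algebra.adjoin k ({companionMatrix k d p} : Set (Matrix (Fin d) (Fin d) k)) =>
        A * (M : Matrix (Fin d) (Fin d) k) * B) := by
  set P := companionMatrix k d p with hPdef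
  intro M N h
  simp only at h
  have hsub : A * ((M : Matrix (Fin d) (Fin d) k) - (N : Matrix (Fin d) (Fin d) k)) * B = 0 := by
    rw [Matrix.mul_sub, Matrix.sub_mul, h, sub_self]
  have hmem : (M : Matrix (Fin d) (Fin d) k) - (N : Matrix (Fin d) (Fin d) k)
      ∈ ((aeval P : Polynomial k →ₐ[k] Matrix (Fin d) (Fin d) k)).range := by
    rw [← Algebra.adjoin_singleton_eq_range_aeval]
    exact Subalgebra.sub_mem _ M.2 N.2
  obtain ⟨q, hq⟩ := hmem
  have hq' : aeval P (q %ₘ p) = (M : Matrix (Fin d) (Fin d) k) - (N : Matrix (Fin d) (Fin d) k) := by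
    have hdm := Polynomial.modByMonic_add_div q p
    calc aeval P (q %ₘ p)
        = aeval P (q %ₘ p) + aeval P p * aeval P (q /ₘ p) := by
          rw [pP_zero hd hp hdeg, zero_mul, add_zero]
      _ = aeval P q := by rw [← map_mul, ← map_add, hdm]
      _ = _ := hq
  have hdeg' : (q %ₘ p).natDegree < d := by
    by_cases h0 : q %ₘ p = 0
    · rw [h0]; simpa using hd
    · rw [Polynomial.natDegree_lt_iff_degree_lt h0]
      have := Polynomial.degree_modByMonic_lt q hp
      rwa [Polynomial.degree_eq_natDegree hp.ne_zero, hdeg] at this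
  have hr0 : (q %ₘ p) = 0 := by
    apply key_lemma k d a b hd ha hb hab p A B hA hB _ hdeg'
    rw [hq']
    exact hsub
  rw [hr0, map_zero] at hq'
  have : (M : Matrix (Fin d) (Fin d) k) = (N : Matrix (Fin d) (Fin d) k) := by
    have := hq'.symm
    rwa [sub_eq_zero] at this
  exact Subtype.ext this
end

section
/- For every positive integer d, the minimum of a + b over all pairs of positive integers (a, b) with ab ≥ d equals ⌈2√d⌉, the least integer greater than or equal to 2√d. -/
/-- For every positive integer `d`, the minimum of `a + b` over all pairs of positive
integers `(a, b)` with `a * b ≥ d` equals `⌈2 √d⌉`. -/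
theorem isLeast_add_mul_ge (d : ℕ) (hd : 0 < d) :
    IsLeast {n : ℕ | ∃ a b : ℕ, 0 < a ∧ 0 < b ∧ d ≤ a * b ∧ n = a + b}
      ⌈2 * Real.sqrt d⌉₊ := by
  set m := ⌈2 * Real.sqrt d⌉₊ with hm
  have hd1 : (1:ℝ) ≤ d := by exact_mod_cast hd
  have hs : (1:ℝ) ≤ Real.sqrt d := by
    rw [show (1:ℝ) = Real.sqrt 1 by simp]
    exact Real.sqrt_le_sqrt hd1
  have hm2 : 2 ≤ m := by
    have : (2:ℝ) ≤ 2 * Real.sqrt d := by linarith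
    calc 2 = ⌈(2:ℝ)⌉₊ := by simp
    _ ≤ m := Nat.ceil_le_ceil this
  have hle : 2 * Real.sqrt d ≤ m := Nat.le_ceil _
  have h4 : 4 * d ≤ m * m := by
    have h0 : (0:ℝ) ≤ Real.sqrt d := Real.sqrt_nonneg _
    have hsq : Real.sqrt d ^ 2 = d := Real.sq_sqrt (by positivity)
    have : (4 * d : ℝ) ≤ (m:ℝ) * m := by nlinarith
    exact_mod_cast this
  constructor
  · refine ⟨m / 2, m - m / 2, by omega, by omega, ?_, by omega⟩
    rcases Nat.even_or_odd m with ⟨k, hk⟩ | ⟨k, hk⟩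
    · have hk' : m / 2 = k := by omega
      have : 4 * d ≤ 4 * (k * k) := by rw [hk] at h4; nlinarith
      have : d ≤ k * k := by omega
      rw [hk', hk, show k + k - k = k from by omega]
      exact this
    · have hk' : m / 2 = k := by omega
      have : 4 * d ≤ 4 * (k * k + k) + 1 := by rw [hk] at h4; nlinarith
      have hdk : d ≤ k * k + k := by omega
      rw [hk', hk, show 2 * k + 1 - k = k + 1 from by omega, Nat.mul_succ]
      exact hdk
  · rintro n ⟨a, b, ha, hb, hab, rfl⟩
    rw [hm]
    apply Nat.ceil_le.mpr
    have h0 : (0:ℝ) ≤ Real.sqrt d := Real.sqrt_nonneg _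
    have hsq : Real.sqrt d ^ 2 = d := Real.sq_sqrt (by positivity)
    have hab' : (d:ℝ) ≤ (a:ℝ) * b := by exact_mod_cast hab
    have ha' : (0:ℝ) ≤ a := by positivity
    have hb' : (0:ℝ) ≤ b := by positivity
    have : 2 * Real.sqrt d ≤ (a:ℝ) + b := by
      nlinarith [sq_nonneg ((a:ℝ) - b), sq_nonneg ((a:ℝ) + b - 2 * Real.sqrt d)]
    push_cast
    linarith
end

section
/- Let V be a finite-dimensional vector space over a field k of characteristic zero, let F be a nonzero linear subspace of End(V), and let r = max{ dim F·v : v ∈ V }, where F·v = {T(v) : T ∈ F}. Then for any finite subset {T_1, …, T_q} of F consisting of nonzero operators, there exists v_0 ∈ V such that dim F·v_0 = r and T_i(v_0) ≠ 0 for all i = 1, …, q. -/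
open Module Polynomial

lemma cofinite_max_rank (k V : Type) [Field k] [CharZero k]
    [AddCommGroup V] [Module k V] [FiniteDimensional k V]
    (F : Submodule k (Module.End k V)) (r : ℕ)
    (hub : ∀ u : V, finrank k (F.map (LinearMap.applyₗ u)) ≤ r)
    (v w : V) (hv : finrank k (F.map (LinearMap.applyₗ v)) = r) :
    {t : k | finrank k (F.map (LinearMap.applyₗ (v + t • w))) ≠ r}.Finite := by
  classical
  set W := F.map (LinearMap.applyₗ v) with hW
  have hrW : finrank k W = r := hv
  let b : Basis (Fin r) k W := (Module.finBasis k W).reindex (finCongr hrW)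
  -- choose operators S j ∈ F with S j v = b j
  have hSex : ∀ j : Fin r, ∃ S : Module.End k V, S ∈ F ∧ S v = (b j : V) := by
    intro j
    have h2 : (b j : V) ∈ Submodule.map (LinearMap.applyₗ v) F := (b j).2
    obtain ⟨S, hS, hSv⟩ := h2
    exact ⟨S, hS, hSv⟩
  choose S hSF hSv using hSex
  have hind : LinearIndependent k (fun j : Fin r => S j v) := by
    have : (fun j : Fin r => S j v) = fun j => (W.subtype (b j)) := by
      funext j; simpa using hSv j
    rw [this]
    exact b.linearIndependent.map' W.subtype W.ker_subtype
  -- left inverse of subtype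
  obtain ⟨g, hg⟩ := W.subtype.exists_leftInverse_of_injective W.ker_subtype
  let φ : Fin r → (V →ₗ[k] k) := fun i => (b.coord i).comp g
  have hδ : ∀ i j, φ i (S j v) = if i = j then 1 else 0 := by
    intro i j
    have h1 : g (S j v) = b j := by
      rw [hSv j]
      have := LinearMap.congr_fun hg (b j)
      simpa using this
    simp only [φ, LinearMap.comp_apply, h1]
    rw [b.coord_apply, b.repr_self]
    simp [Finsupp.single_apply, eq_comm]
  -- polynomial
  let p : Polynomial k := Matrix.det (Matrix.of fun i j : Fin r =>
    C (φ i (S j v)) + X * C (φ i (S j w)))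
  have heval : ∀ t : k, p.eval t =
      Matrix.det (Matrix.of fun i j : Fin r => φ i (S j (v + t • w))) := by
    intro t
    have := RingHom.map_det (evalRingHom t) (Matrix.of fun i j : Fin r =>
      C (φ i (S j v)) + X * C (φ i (S j w)))
    rw [show p.eval t = (evalRingHom t) p from rfl, this]
    congr 1
    ext i j
    simp only [RingHom.mapMatrix_apply, Matrix.map_apply, Matrix.of_apply, coe_evalRingHom,
      eval_add, eval_mul, eval_C, eval_X, map_add, map_smul, smul_eq_mul]
  have hp0 : p.eval 0 = 1 := by
    rw [heval 0]
    have : (Matrix.of fun i j : Fin r => φ i (S j (v + (0:k) • w))) = 1 := by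
      ext i j
      have h0 : S j (v + (0:k) • w) = S j v := by simp
      rw [Matrix.of_apply, h0, hδ i j, Matrix.one_apply]
    rw [this, Matrix.det_one]
  have hpne : p ≠ 0 := fun h => by simp [h] at hp0
  have key : ∀ t : k, p.eval t ≠ 0 → finrank k (F.map (LinearMap.applyₗ (v + t • w))) = r := by
    intro t ht
    set Wt := F.map (LinearMap.applyₗ (v + t • w)) with hWt
    have hmem : ∀ j : Fin r, S j (v + t • w) ∈ Wt := by
      intro j; exact ⟨S j, hSF j, rfl⟩
    set N : Matrix (Fin r) (Fin r) k := Matrix.of fun i j => φ i (S j (v + t • w)) with hN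
    have hdet : N.det ≠ 0 := by rw [← heval t] at *; exact ht
    have hindt : LinearIndependent k (fun j : Fin r => (⟨S j (v + t • w), hmem j⟩ : Wt)) := by
      rw [Fintype.linearIndependent_iff]
      intro c hc j
      have hcV : ∑ j, c j • (S j (v + t • w)) = 0 := by
        have := congrArg (Wt.subtype) hc
        simpa using this
      have hφ : ∀ i, ∑ j, c j * φ i (S j (v + t • w)) = 0 := by
        intro i
        have := congrArg (φ i) hcV
        simpa [map_sum, map_smul, smul_eq_mul, mul_add] using this
      have hmul : N.mulVec c = 0 := by
        funext i
        simpa [Matrix.mulVec, dotProduct, hN, mul_comm] using hφ i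
      have := Matrix.eq_zero_of_mulVec_eq_zero hdet hmul
      exact congrFun this j
    have h1 : r ≤ finrank k Wt := by
      simpa using hindt.fintype_card_le_finrank
    exact le_antisymm (hub _) h1
  apply Set.Finite.subset (Polynomial.finite_setOf_isRoot hpne)
  intro t ht
  by_contra hroot
  exact ht (key t hroot)

/-- Let `V` be a finite-dimensional vector space over a field `k` of characteristic zero,
`F` a nonzero subspace of `End(V)`, and `r = max { dim F·v : v ∈ V }` (where
`F·v = {T v : T ∈ F}`). Then for any finite family `T₁, …, T_q` of nonzero operators in
`F` there exists `v₀ ∈ V` with `dim F·v₀ = r` and `Tᵢ v₀ ≠ 0` for all `i`. -/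
theorem exists_vector_max_rank_and_ne_zero (k V : Type) [Field k] [CharZero k]
    [AddCommGroup V] [Module k V] [FiniteDimensional k V]
    (F : Submodule k (Module.End k V)) (hF : F ≠ ⊥) (r : ℕ)
    (hr : IsGreatest {n : ℕ | ∃ v : V, n = finrank k (F.map (LinearMap.applyₗ v))} r)
    (q : ℕ) (T : Fin q → Module.End k V) (hT : ∀ i, T i ∈ F) (hT0 : ∀ i, T i ≠ 0) :
    ∃ v₀ : V, finrank k (F.map (LinearMap.applyₗ v₀)) = r ∧ ∀ i, T i v₀ ≠ 0 := by
  have hub : ∀ u : V, finrank k (F.map (LinearMap.applyₗ u)) ≤ r := by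
    intro u; exact hr.2 ⟨u, rfl⟩
  have key : ∀ m (T : Fin m → Module.End k V), (∀ i, T i ∈ F) → (∀ i, T i ≠ 0) →
      ∃ v₀ : V, finrank k (F.map (LinearMap.applyₗ v₀)) = r ∧ ∀ i, T i v₀ ≠ 0 := by
    intro m
    induction m with
    | zero =>
      intro T _ _
      obtain ⟨v, hv⟩ := hr.1
      exact ⟨v, hv.symm, fun i => i.elim0⟩
    | succ n ih =>
      intro T hTF hTne
      obtain ⟨v₀, hv₀, hTi⟩ := ih (fun j => T j.castSucc) (fun j => hTF _) (fun j => hTne _)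
      have hwex : ∃ w : V, T (Fin.last n) w ≠ 0 := by
        by_contra h
        push_neg at h
        exact hTne (Fin.last n) (LinearMap.ext fun x => h x)
      obtain ⟨w, hw⟩ := hwex
      have hcase : ∀ i : Fin (n + 1), T i v₀ ≠ 0 ∨ T i w ≠ 0 := by
        intro i
        rcases eq_or_ne i (Fin.last n) with h | h
        · right; rw [h]; exact hw
        · left
          obtain ⟨j, rfl⟩ := Fin.exists_castSucc_eq.2 h
          exact hTi j
      have hBfin : ∀ i : Fin (n + 1), {t : k | T i (v₀ + t • w) = 0}.Finite := by
        intro i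
        apply Set.Subsingleton.finite
        intro t₁ h₁ t₂ h₂
        simp only [Set.mem_setOf_eq, map_add, map_smul] at h₁ h₂
        by_contra hne
        have hsub : (t₁ - t₂) • T i w = 0 := by
          have := sub_eq_zero.2 (h₁.trans h₂.symm)
          simpa [sub_smul] using this
        have hTw : T i w = 0 := by
          rcases smul_eq_zero.1 hsub with h | h
          · exact absurd (sub_eq_zero.1 h) hne
          · exact h
        have hTv : T i v₀ = 0 := by
          rw [hTw, smul_zero, add_zero] at h₁; exact h₁
        rcases hcase i with h | h
        · exact h hTv
        · exact h hTw
      have hB0 : {t : k | finrank k (F.map (LinearMap.applyₗ (v₀ + t • w))) ≠ r}.Finite :=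
        cofinite_max_rank k V F r hub v₀ w hv₀
      have hbad : ({t : k | finrank k (F.map (LinearMap.applyₗ (v₀ + t • w))) ≠ r} ∪
          ⋃ i : Fin (n + 1), {t : k | T i (v₀ + t • w) = 0}).Finite :=
        hB0.union (Set.finite_iUnion hBfin)
      have : Infinite k := inferInstance
      obtain ⟨t, ht⟩ := hbad.infinite_compl.nonempty
      simp only [Set.mem_compl_iff, Set.mem_union, Set.mem_iUnion, Set.mem_setOf_eq,
        not_or, not_exists, not_not] at ht
      exact ⟨v₀ + t • w, ht.1, fun i => ht.2 i⟩
  exact key q T hT hT0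
end

section
/- Let V be a finite-dimensional vector space over a field k of characteristic zero and let N be a nonzero subspace of End(V) consisting of pairwise commuting nilpotent operators. Then there exist a linearly independent set B = {v_1, …, v_s} ⊂ V and a direct sum decomposition N = N_1 ⊕ … ⊕ N_s into nonzero subspaces such that, defining F_i : N → V by F_i(T) = T(v_i), the following hold: (1) the restriction of F_i to N_i is injective for every i = 1, …, s; (2) N_j ⊆ ker F_i whenever 1 ≤ i < j ≤ s; (3) N_j·V ⊆ F_i(N_i) whenever 1 ≤ i < j ≤ s (where N_j·V is the span of {T(v) : T ∈ N_j, v ∈ V}). Furthermore, for any given finite set {T_1, …, T_q} of nonzero operators in N, the vector v_1 can be chosen so that T_k(v_1) ≠ 0 for all k = 1, …, q. -/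
set_option linter.unusedSectionVars false
set_option linter.unusedVariables false
set_option maxHeartbeats 1000000

open Module Polynomial

variable {k V : Type} [Field k] [AddCommGroup V] [Module k V] [FiniteDimensional k V]


variable {k V : Type} [Field k] [AddCommGroup V] [Module k V] [FiniteDimensional k V]




lemma exists_dual_family {m : ℕ} {a : Fin m → V} (ha : LinearIndependent k a) :
    ∃ f : Fin m → (V →ₗ[k] k), ∀ i j, f i (a j) = if i = j then 1 else 0 := by
  classical
  set W : Submodule k V := Submodule.span k (Set.range a)
  let bW : Basis (Fin m) k W := Basis.span ha
  obtain ⟨W', hW'⟩ := W.exists_isCompl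
  let π : V →ₗ[k] W := W.projectionOnto W' hW'
  refine ⟨fun i => (bW.coord i).comp π, fun i j => ?_⟩
  have haj : a j ∈ W := Submodule.subset_span ⟨j, rfl⟩
  have hπ : π (a j) = ⟨a j, haj⟩ := by
    simpa using Submodule.projectionOnto_apply_left hW' ⟨a j, haj⟩
  have hb : (⟨a j, haj⟩ : W) = bW j := by
    apply Subtype.ext
    exact congrArg Subtype.val (Basis.span_apply ha j).symm
  simp only [LinearMap.comp_apply, hπ, hb, Basis.coord_apply, Basis.repr_self]
  rw [Finsupp.single_apply]
  simp [eq_comm]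

lemma linearIndependent_of_det_ne_zero {m : ℕ} {f : Fin m → (V →ₗ[k] k)} {z : Fin m → V}
    (h : (Matrix.of fun i j => f i (z j)).det ≠ 0) : LinearIndependent k z := by
  classical
  rw [Fintype.linearIndependent_iff]
  intro c hc i
  have hmv : (Matrix.of fun i j => f i (z j)).mulVec c = 0 := by
    funext i
    have := congrArg (f i) hc
    simpa [Matrix.mulVec, dotProduct, map_sum, mul_comm] using this
  have := Matrix.eq_zero_of_mulVec_eq_zero h hmv
  exact congrFun this i

/-- Perturbing a linearly independent family keeps it independent for all but
finitely many parameters. -/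
lemma finite_bad {m : ℕ} (a b : Fin m → V) (ha : LinearIndependent k a) :
    {t : k | ¬ LinearIndependent k (fun i => a i + t • b i)}.Finite := by
  classical
  obtain ⟨f, hf⟩ := exists_dual_family ha
  set P : Matrix (Fin m) (Fin m) k[X] :=
    Matrix.of fun i j => C (f i (a j)) + X * C (f i (b j)) with hP
  have hmapdet : ∀ t : k, P.det.eval t = (P.map (evalRingHom t)).det := by
    intro t
    have := RingHom.map_det (evalRingHom t) P
    rw [RingHom.mapMatrix_apply] at this
    exact this
  have hev : ∀ t : k, (Matrix.of fun i j => f i (a j + t • b j)).det = P.det.eval t := by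
    intro t
    rw [hmapdet]
    congr 1
    ext i j
    simp only [Matrix.map_apply, Matrix.of_apply, P, coe_evalRingHom, eval_add, eval_mul,
      eval_C, eval_X, map_add, map_smul, smul_eq_mul]
  have hP0 : P.det.eval 0 = 1 := by
    have h1 : P.map (evalRingHom 0) = 1 := by
      ext i j
      simp only [Matrix.map_apply, Matrix.of_apply, P, coe_evalRingHom, eval_add, eval_mul,
        eval_C, eval_X, zero_mul, add_zero, hf i j, Matrix.one_apply]
    rw [hmapdet, h1, Matrix.det_one]
  have hPne : P.det ≠ 0 := fun h => by simp [h] at hP0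
  have hsub : {t : k | ¬ LinearIndependent k (fun i => a i + t • b i)} ⊆
      ↑P.det.roots.toFinset := by
    intro t ht
    simp only [Set.mem_setOf_eq] at ht
    by_contra hroot
    apply ht
    apply linearIndependent_of_det_ne_zero (f := f)
    rw [hev]
    intro h0
    exact hroot (by simpa [Multiset.mem_toFinset, mem_roots hPne] using h0)
  exact Set.Finite.subset (Set.finite_coe_iff.mp inferInstance) hsub



/-- m independent vectors inside a submodule bound its finrank below. -/
lemma card_le_finrank_of_mem {m : ℕ} {W : Submodule k V} {z : Fin m → V}
    (hz : ∀ i, z i ∈ W) (hli : LinearIndependent k z) : m ≤ finrank k W := by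
  have h2 : LinearIndependent k (fun i => (⟨z i, hz i⟩ : W)) := by
    apply LinearIndependent.of_comp W.subtype
    exact hli
  simpa using h2.fintype_card_le_finrank

/-- extract an independent family of evaluations with preimages in N -/
lemma exists_preim_family {m : ℕ} {N : Submodule k (Module.End k V)} {v : V}
    (hm : m ≤ finrank k ↥(N.map (LinearMap.applyₗ (R := k) v))) :
    ∃ S : Fin m → Module.End k V, (∀ j, S j ∈ N) ∧ LinearIndependent k (fun j => S j v) := by
  classical
  set W := N.map (LinearMap.applyₗ (R := k) v) with hW
  let bW : Basis (Fin (finrank k W)) k W := finBasis k W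
  have hli : LinearIndependent k (fun i : Fin (finrank k W) => (bW i : V)) :=
    bW.linearIndependent.map' W.subtype (Submodule.ker_subtype W)
  have hli2 : LinearIndependent k (fun j : Fin m => (bW (Fin.castLE hm j) : V)) :=
    hli.comp (Fin.castLE hm) (Fin.castLE_injective hm)
  have hmem : ∀ j : Fin m, ((bW (Fin.castLE hm j) : V)) ∈ W := fun j => (bW _).2
  choose S hSN hSv using fun j : Fin m => Submodule.mem_map.mp (hmem j)
  refine ⟨S, hSN, ?_⟩
  have : (fun j : Fin m => S j v) = fun j => (bW (Fin.castLE hm j) : V) := by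
    funext j; exact hSv j
  rw [this]; exact hli2

section Max

variable (N : Submodule k (Module.End k V))

/-- evaluation rank -/
noncomputable def evRank (v : V) : ℕ := finrank k ↥(N.map (LinearMap.applyₗ (R := k) v))

lemma exists_argmax : ∃ v₀ : V, ∀ v, evRank N v ≤ evRank N v₀ := by
  have hbdd : BddAbove (Set.range (evRank N)) := by
    refine ⟨finrank k V, ?_⟩
    rintro _ ⟨v, rfl⟩
    exact Submodule.finrank_le _
  have hne : (Set.range (evRank N)).Nonempty := ⟨_, ⟨0, rfl⟩⟩
  obtain ⟨v₀, hv₀⟩ := Nat.sSup_mem hne hbdd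
  exact ⟨v₀, fun v => hv₀ ▸ le_csSup hbdd ⟨v, rfl⟩⟩

variable [Infinite k]

/-- Key genericity lemma: at a rank-maximizing point `v₀`, any operator of `N`
annihilating `v₀` has its whole image inside `N v₀`. -/
lemma image_subset_of_argmax {v₀ : V} (hmax : ∀ v, evRank N v ≤ evRank N v₀)
    {T : Module.End k V} (hTN : T ∈ N) (hT0 : T v₀ = 0) (w : V) :
    T w ∈ N.map (LinearMap.applyₗ (R := k) v₀) := by
  classical
  by_contra hTw
  set W₀ := N.map (LinearMap.applyₗ (R := k) v₀) with hW₀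
  set r := evRank N v₀ with hr
  obtain ⟨S, hSN, hSli⟩ := exists_preim_family (N := N) (v := v₀) (le_refl (evRank N v₀))
  have hxmem : ∀ j, S j v₀ ∈ W₀ := fun j => Submodule.mem_map.mpr ⟨S j, hSN j, rfl⟩
  have hspan : Submodule.span k (Set.range fun j => S j v₀) ≤ W₀ := by
    rw [Submodule.span_le]; rintro _ ⟨j, rfl⟩; exact hxmem j
  have hacons : LinearIndependent k (Fin.cons (T w) (fun j => S j v₀) : Fin (r+1) → V) :=
    hSli.fin_cons (fun h => hTw (hspan h))
  set a : Fin (r+1) → V := Fin.cons (T w) (fun j => S j v₀) with ha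
  set b : Fin (r+1) → V := Fin.cons 0 (fun j => S j w) with hb
  have hfin : ({0} ∪ {t : k | ¬ LinearIndependent k (fun i => a i + t • b i)}).Finite :=
    (Set.finite_singleton 0).union (finite_bad a b hacons)
  obtain ⟨t, ht⟩ := hfin.infinite_compl.nonempty
  simp only [Set.mem_compl_iff, Set.mem_union, Set.mem_singleton_iff, Set.mem_setOf_eq,
    not_or, not_not] at ht
  obtain ⟨ht0, hli⟩ := ht
  set y : Fin (r+1) → V := fun i => a i + t • b i with hy
  -- scale the 0-th coordinate by t
  set u : Fin (r+1) → kˣ := Fin.cons (Units.mk0 t ht0) 1 with hu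
  have hz : LinearIndependent k (u • y) := hli.units_smul u
  set Wt := N.map (LinearMap.applyₗ (R := k) (v₀ + t • w)) with hWt
  have hmem : ∀ i, (u • y) i ∈ Wt := by
    intro i
    refine Fin.cases ?_ ?_ i
    · have : (u • y) 0 = T (v₀ + t • w) := by
        simp [Pi.smul_apply', hy, ha, hb, hu, map_add, map_smul, hT0]
      rw [this]
      exact Submodule.mem_map.mpr ⟨T, hTN, rfl⟩
    · intro j
      have : (u • y) j.succ = (S j) (v₀ + t • w) := by
        simp [Pi.smul_apply', hy, ha, hb, hu, map_add, map_smul]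
      rw [this]
      exact Submodule.mem_map.mpr ⟨S j, hSN j, rfl⟩
  have hle : r + 1 ≤ finrank k ↥Wt := card_le_finrank_of_mem hmem hz
  have h2 : evRank N (v₀ + t • w) ≤ r := hmax _
  rw [evRank, ← hWt] at h2
  omega

/-- A rank-maximizing point avoiding kernels of finitely many nonzero operators of `N`. -/
lemma exists_good_point (L : List (Module.End k V)) (hL : ∀ T ∈ L, T ≠ 0) :
    ∃ v₁ : V, (∀ v, evRank N v ≤ evRank N v₁) ∧ ∀ T ∈ L, T v₁ ≠ 0 := by
  classical
  induction L with
  | nil =>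
    obtain ⟨v₀, h⟩ := exists_argmax N
    exact ⟨v₀, h, by simp⟩
  | cons T₀ L' ih =>
    obtain ⟨v, hvmax, hvL⟩ := ih (fun T hT => hL T (List.mem_cons_of_mem _ hT))
    by_cases hT₀v : T₀ v ≠ 0
    · refine ⟨v, hvmax, ?_⟩
      intro T hT
      rcases List.mem_cons.mp hT with rfl | hT
      · exact hT₀v
      · exact hvL T hT
    · push_neg at hT₀v
      have hT₀ : T₀ ≠ 0 := hL T₀ List.mem_cons_self
      obtain ⟨w, hw⟩ : ∃ w, T₀ w ≠ 0 := by
        by_contra h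
        push_neg at h
        exact hT₀ (LinearMap.ext fun x => h x)
      -- bad parameters
      set r := evRank N v with hr
      obtain ⟨S, hSN, hSli⟩ := exists_preim_family (N := N) (v := v) (le_refl (evRank N v))
      set bad1 : Set k := {t : k | ¬ LinearIndependent k
        (fun j : Fin r => S j v + t • S j w)} with hbad1
      have hbad1fin : bad1.Finite := finite_bad _ _ hSli
      set bad2 : Set k := ⋃ T ∈ L'.toFinset, {t : k | T v + t • T w = 0} with hbad2
      have hbad2fin : bad2.Finite := by
        refine Set.Finite.biUnion (L'.toFinset : Finset _).finite_toSet ?_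
        intro T hT
        rcases Set.eq_empty_or_nonempty {t : k | T v + t • T w = 0} with h | ⟨t₁, ht₁⟩
        · simp [h]
        · apply Set.Subsingleton.finite
          intro s hs s' hs'
          simp only [Set.mem_setOf_eq] at hs hs'
          by_contra hss
          have hsub : (s - s') • T w = 0 := by
            have := sub_eq_zero.mpr (hs.trans hs'.symm)
            simpa [sub_smul] using this
          have hTw0 : T w = 0 := by
            rcases smul_eq_zero.mp hsub with h | h
            · exact absurd (sub_eq_zero.mp h) hss
            · exact h
          have hTv : T v ≠ 0 := hvL T (List.mem_toFinset.mp hT)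
          exact hTv (by simpa [hTw0] using hs)
      have hfin : ({0} ∪ bad1 ∪ bad2).Finite :=
        ((Set.finite_singleton 0).union hbad1fin).union hbad2fin
      obtain ⟨t, ht⟩ := hfin.infinite_compl.nonempty
      simp only [Set.mem_compl_iff, Set.mem_union, Set.mem_singleton_iff, not_or] at ht
      obtain ⟨⟨ht0, htb1⟩, htb2⟩ := ht
      refine ⟨v + t • w, ?_, ?_⟩
      · -- rank still maximal
        intro u
        have hli : LinearIndependent k (fun j : Fin r => S j v + t • S j w) := by
          by_contra h; exact htb1 h
        have hmem : ∀ j : Fin r, S j v + t • S j w ∈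
            N.map (LinearMap.applyₗ (R := k) (v + t • w)) := by
          intro j
          refine Submodule.mem_map.mpr ⟨S j, hSN j, ?_⟩
          simp [map_add, map_smul]
        have := card_le_finrank_of_mem hmem hli
        calc evRank N u ≤ r := hvmax u
        _ ≤ evRank N (v + t • w) := this
      · intro T hT
        rcases List.mem_cons.mp hT with rfl | hT
        · simp only [map_add, map_smul, hT₀v, zero_add]
          exact fun h => hw (by simpa [smul_eq_zero, ht0] using h)
        · intro h
          apply htb2
          rw [hbad2]
          simp only [Set.mem_iUnion, Set.mem_setOf_eq]
          exact ⟨T, List.mem_toFinset.mpr hT, by simpa [map_add, map_smul] using h⟩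

end Max

/-- `iSupIndep` for a cons of a complement. -/
lemma aux_cons_indep {M : Type} [AddCommGroup M] [Module k M] {n : ℕ}
    {A K : Submodule k M} {𝒩 : Fin n → Submodule k M}
    (hAK : A ⊓ K = ⊥) (h𝒩 : iSupIndep 𝒩) (hsup : (⨆ i, 𝒩 i) = K) :
    iSupIndep (Fin.cons A 𝒩 : Fin (n+1) → Submodule k M) := by
  rw [iSupIndep_def]
  have h𝒩K : ∀ j, 𝒩 j ≤ K := fun j => hsup ▸ le_iSup 𝒩 j
  intro i
  refine Fin.cases ?_ ?_ i
  · -- i = 0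
    have hle : (⨆ (j : Fin (n+1)) (_ : j ≠ 0), Fin.cons A 𝒩 j) ≤ K := by
      refine iSup_le fun j => iSup_le fun hj => ?_
      obtain ⟨j', rfl⟩ := Fin.eq_succ_of_ne_zero hj
      rw [Fin.cons_succ]
      exact h𝒩K j'
    rw [Fin.cons_zero]
    exact (disjoint_iff.mpr hAK).mono_right hle
  · intro i'
    have hle : (⨆ (j : Fin (n+1)) (_ : j ≠ i'.succ), Fin.cons A 𝒩 j) ≤
        A ⊔ (⨆ (j' : Fin n) (_ : j' ≠ i'), 𝒩 j') := by
      refine iSup_le fun j => iSup_le fun hj => ?_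
      rcases eq_or_ne j 0 with rfl | hj0
      · rw [Fin.cons_zero]; exact le_sup_left
      · obtain ⟨j', rfl⟩ := Fin.eq_succ_of_ne_zero hj0
        rw [Fin.cons_succ]
        have : j' ≠ i' := fun h => hj (by rw [h])
        exact le_trans (le_iSup₂ (f := fun (j' : Fin n) (_ : j' ≠ i') => 𝒩 j') j' this)
          le_sup_right
    rw [Fin.cons_succ]
    refine Disjoint.mono_right hle ?_
    rw [Submodule.disjoint_def]
    intro x hx hxAE
    set E := ⨆ (j' : Fin n) (_ : j' ≠ i'), 𝒩 j' with hE
    have hEK : E ≤ K := iSup_le fun j' => iSup_le fun _ => h𝒩K j'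
    obtain ⟨a, haA, e, heE, hxe⟩ := Submodule.mem_sup.mp hxAE
    have haK : a ∈ K := by
      have hxK : x ∈ K := h𝒩K i' hx
      have : a = x - e := by rw [← hxe]; abel
      rw [this]
      exact Submodule.sub_mem K hxK (hEK heE)
    have ha0 : a = 0 := by
      have : a ∈ A ⊓ K := Submodule.mem_inf.mpr ⟨haA, haK⟩
      rwa [hAK, Submodule.mem_bot] at this
    have hxE : x ∈ E := by rw [← hxe, ha0, zero_add]; exact heE
    exact Submodule.disjoint_def.mp (h𝒩 i') x hx hxE

lemma aux_cons_sup {M : Type} [AddCommGroup M] [Module k M] {n : ℕ}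
    (A : Submodule k M) (𝒩 : Fin n → Submodule k M) :
    (⨆ i, (Fin.cons A 𝒩 : Fin (n+1) → Submodule k M) i) = A ⊔ ⨆ j, 𝒩 j := by
  apply le_antisymm
  · refine iSup_le fun i => ?_
    refine Fin.cases ?_ ?_ i
    · rw [Fin.cons_zero]; exact le_sup_left
    · intro j
      rw [Fin.cons_succ]
      exact le_trans (le_iSup 𝒩 j) le_sup_right
  · refine sup_le ?_ (iSup_le fun j => ?_)
    · exact le_iSup (Fin.cons A 𝒩 : Fin (n+1) → Submodule k M) 0
    · have := le_iSup (Fin.cons A 𝒩 : Fin (n+1) → Submodule k M) j.succ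
      rwa [Fin.cons_succ] at this

/-- Linear independence from the triangular structure. -/
lemma li_of_props {s : ℕ} {v : Fin s → V} {𝒩 : Fin s → Submodule k (Module.End k V)}
    (h1 : ∀ i, 𝒩 i ≠ ⊥)
    (h4 : ∀ i, ∀ T ∈ 𝒩 i, T (v i) = 0 → T = 0)
    (h5 : ∀ i j : Fin s, i < j → ∀ T ∈ 𝒩 j, T (v i) = 0) :
    LinearIndependent k v := by
  classical
  rw [Fintype.linearIndependent_iff]
  intro c hc
  by_contra hne
  push_neg at hne
  obtain ⟨i, hi⟩ := hne
  set F : Finset (Fin s) := Finset.univ.filter (fun i => c i ≠ 0) with hF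
  have hFne : F.Nonempty := ⟨i, by simp [hF, hi]⟩
  set i₀ := F.max' hFne with hi₀
  have hci₀ : c i₀ ≠ 0 := by
    have := F.max'_mem hFne
    simpa [hF] using this
  obtain ⟨T, hTmem, hTne⟩ := Submodule.exists_mem_ne_zero_of_ne_bot (h1 i₀)
  have hsum : (∑ j, c j • T (v j)) = 0 := by
    have := congrArg T hc
    simpa [map_sum, map_smul] using this
  have hsingle : (∑ j, c j • T (v j)) = c i₀ • T (v i₀) := by
    refine Finset.sum_eq_single i₀ ?_ (by simp)
    intro b _ hb
    rcases eq_or_ne (c b) 0 with h | h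
    · simp [h]
    · have hbF : b ∈ F := by simp [hF, h]
      have hble : b ≤ i₀ := F.le_max' b hbF
      have hblt : b < i₀ := lt_of_le_of_ne hble hb
      rw [h5 b i₀ hblt T hTmem, smul_zero]
  rw [hsingle] at hsum
  have : T (v i₀) = 0 := by
    rcases smul_eq_zero.mp hsum with h | h
    · exact absurd h hci₀
    · exact h
  exact hTne (h4 i₀ T hTmem this)

/-- Main induction. -/
lemma aux_main [Infinite k] : ∀ n : ℕ, ∀ N : Submodule k (Module.End k V),
    finrank k ↥N ≤ n → N ≠ ⊥ →
    ∀ L : List (Module.End k V), (∀ T ∈ L, T ∈ N ∧ T ≠ 0) →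
    ∃ (s : ℕ) (hs : 0 < s) (v : Fin s → V) (𝒩 : Fin s → Submodule k (Module.End k V)),
      (∀ i, 𝒩 i ≠ ⊥) ∧
      iSupIndep 𝒩 ∧
      (⨆ i, 𝒩 i) = N ∧
      (∀ i, ∀ T ∈ 𝒩 i, T (v i) = 0 → T = 0) ∧
      (∀ i j : Fin s, i < j → ∀ T ∈ 𝒩 j, T (v i) = 0) ∧
      (∀ i j : Fin s, i < j → ∀ T ∈ 𝒩 j, ∀ w : V, ∃ S ∈ 𝒩 i, S (v i) = T w) ∧
      (∀ T ∈ L, T (v ⟨0, hs⟩) ≠ 0) := by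
  intro n
  induction n with
  | zero =>
    intro N hrank hN L hL
    exfalso
    apply hN
    have : finrank k ↥N = 0 := Nat.le_zero.mp hrank
    exact Submodule.finrank_eq_zero.mp this
  | succ n ih =>
    intro N hrank hN L hL
    obtain ⟨v₁, hmax, hLv₁⟩ := exists_good_point N L (fun T hT => (hL T hT).2)
    set K : Submodule k (Module.End k V) :=
      N ⊓ LinearMap.ker (LinearMap.applyₗ (R := k) v₁) with hK
    have hKmem : ∀ T, T ∈ K ↔ T ∈ N ∧ T v₁ = 0 := by
      intro T
      rw [hK, Submodule.mem_inf, LinearMap.mem_ker]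
      rfl
    have hKN : K ≤ N := inf_le_left
    -- K ≠ N
    have hKneN : K ≠ N := by
      -- there is T ∈ N with T v₁ ≠ 0
      have hrpos : N.map (LinearMap.applyₗ (R := k) v₁) ≠ ⊥ := by
        intro hbot
        apply hN
        obtain ⟨T₂, hT₂N, hT₂⟩ := Submodule.exists_mem_ne_zero_of_ne_bot hN
        obtain ⟨w₂, hw₂⟩ : ∃ w₂, T₂ w₂ ≠ 0 := by
          by_contra h
          push_neg at h
          exact hT₂ (LinearMap.ext fun x => h x)
        have h1 : 1 ≤ evRank N w₂ := by
          have : T₂ w₂ ∈ N.map (LinearMap.applyₗ (R := k) w₂) :=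
            Submodule.mem_map.mpr ⟨T₂, hT₂N, rfl⟩
          rw [evRank]
          by_contra hcon
          push_neg at hcon
          have h0 : finrank k ↥(N.map (LinearMap.applyₗ (R := k) w₂)) = 0 := by omega
          rw [Submodule.finrank_eq_zero.mp h0, Submodule.mem_bot] at this
          exact hw₂ this
        have h2 := hmax w₂
        have h3 : evRank N v₁ = 0 := by
          rw [evRank, hbot]
          exact finrank_bot k V
        omega
      obtain ⟨u, hu, hu0⟩ := Submodule.exists_mem_ne_zero_of_ne_bot hrpos
      obtain ⟨T, hTN, hTv⟩ := Submodule.mem_map.mp hu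
      intro hEq
      have : T ∈ K := hEq ▸ hTN
      rw [hKmem] at this
      exact hu0 (by rw [← hTv]; exact this.2 ▸ rfl)
    -- complement
    obtain ⟨C, hC⟩ := Submodule.exists_isCompl (K.comap N.subtype)
    set N₁ : Submodule k (Module.End k V) := C.map N.subtype with hN₁
    have hmapK : (K.comap N.subtype).map N.subtype = K := by
      rw [Submodule.map_comap_subtype, inf_eq_right.mpr hKN]
    have hN₁sup : N₁ ⊔ K = N := by
      rw [hN₁, ← hmapK, ← Submodule.map_sup, sup_comm,
        codisjoint_iff.mp hC.codisjoint, Submodule.map_subtype_top]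
    have hN₁inf : N₁ ⊓ K = ⊥ := by
      rw [hN₁, ← hmapK, ← Submodule.map_inf _ (Submodule.injective_subtype N),
        inf_comm, disjoint_iff.mp hC.disjoint, Submodule.map_bot]
    have hN₁leN : N₁ ≤ N := by rw [← hN₁sup]; exact le_sup_left
    by_cases hKbot : K = ⊥
    · -- single block
      refine ⟨1, one_pos, fun _ => v₁, fun _ => N, fun _ => hN, ?_, by rw [iSup_const], ?_, ?_, ?_, ?_⟩
      · rw [iSupIndep_def]
        intro i
        have hle : (⨆ (j : Fin 1) (_ : j ≠ i), N) ≤ ⊥ :=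
          iSup_le fun j => iSup_le fun hj => absurd (Subsingleton.elim j i) hj
        exact disjoint_bot_right.mono_right hle
      · intro i T hTN hT0
        have : T ∈ K := (hKmem T).mpr ⟨hTN, hT0⟩
        rwa [hKbot, Submodule.mem_bot] at this
      · intro i j hij
        exact absurd hij (by omega)
      · intro i j hij
        exact absurd hij (by omega)
      · exact hLv₁
    · -- recursive case
      have hKlt : K < N := lt_of_le_of_ne hKN hKneN
      have hKrank : finrank k ↥K ≤ n := by
        have := Submodule.finrank_lt_finrank_of_lt hKlt
        omega
      obtain ⟨s', hs', v', 𝒩', h1', h2', h3', h4', h5', h6', _⟩ :=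
        ih K hKrank hKbot [] (by simp)
      have h𝒩K : ∀ j, 𝒩' j ≤ K := fun j => h3' ▸ le_iSup 𝒩' j
      have hN₁ne : N₁ ≠ ⊥ := by
        intro h
        apply hKneN
        rw [← hN₁sup, h, bot_sup_eq]
      refine ⟨s' + 1, Nat.succ_pos _, Fin.cons v₁ v', Fin.cons N₁ 𝒩', ?_, ?_, ?_, ?_, ?_, ?_, ?_⟩
      · intro i
        refine Fin.cases ?_ ?_ i
        · rw [Fin.cons_zero]; exact hN₁ne
        · intro j; rw [Fin.cons_succ]; exact h1' j
      · exact aux_cons_indep hN₁inf h2' h3'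
      · rw [aux_cons_sup, h3', hN₁sup]
      · intro i
        refine Fin.cases ?_ ?_ i
        · rw [Fin.cons_zero, Fin.cons_zero]
          intro T hTN₁ hT0
          have hTK : T ∈ K := (hKmem T).mpr ⟨hN₁leN hTN₁, hT0⟩
          have : T ∈ N₁ ⊓ K := Submodule.mem_inf.mpr ⟨hTN₁, hTK⟩
          rwa [hN₁inf, Submodule.mem_bot] at this
        · intro i'
          rw [Fin.cons_succ]
          intro T hT hT0
          rw [Fin.cons_succ] at hT0
          exact h4' i' T hT hT0
      · intro i j hij T hT
        obtain ⟨j', rfl⟩ := Fin.eq_succ_of_ne_zero (Fin.pos_iff_ne_zero.mp (lt_of_le_of_lt (Fin.zero_le i) hij))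
        rw [Fin.cons_succ] at hT
        have hTK : T ∈ K := h𝒩K j' hT
        revert hij
        refine Fin.cases ?_ ?_ i
        · intro _
          rw [Fin.cons_zero]
          exact ((hKmem T).mp hTK).2
        · intro i' hlt
          rw [Fin.cons_succ]
          exact h5' i' j' (Fin.succ_lt_succ_iff.mp hlt) T hT
      · intro i j hij T hT w
        obtain ⟨j', rfl⟩ := Fin.eq_succ_of_ne_zero (Fin.pos_iff_ne_zero.mp (lt_of_le_of_lt (Fin.zero_le i) hij))
        rw [Fin.cons_succ] at hT
        have hTK : T ∈ K := h𝒩K j' hT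
        revert hij
        refine Fin.cases ?_ ?_ i
        · intro _
          simp only [Fin.cons_zero]
          have hTw := image_subset_of_argmax N hmax ((hKmem T).mp hTK).1 ((hKmem T).mp hTK).2 w
          obtain ⟨S₀, hS₀N, hS₀v⟩ := Submodule.mem_map.mp hTw
          have hS₀' : S₀ ∈ N₁ ⊔ K := hN₁sup ▸ hS₀N
          obtain ⟨S, hS, S₂, hS₂, hsum⟩ := Submodule.mem_sup.mp hS₀'
          refine ⟨S, hS, ?_⟩
          have hS₂0 : S₂ v₁ = 0 := ((hKmem S₂).mp hS₂).2
          have heq : S v₁ + S₂ v₁ = T w := by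
            rw [← hS₀v, ← hsum]
            rfl
          rw [hS₂0, add_zero] at heq
          exact heq
        · intro i' hlt
          simp only [Fin.cons_succ]
          exact h6' i' j' (Fin.succ_lt_succ_iff.mp hlt) T hT w
      · intro T hT
        exact hLv₁ T hT

/-- **Structure of a commuting family of nilpotent operators.** Let `V` be a
finite-dimensional vector space over a field `k` of characteristic zero and `N` a nonzero
abelian subspace of `End(V)` consisting of nilpotent operators. Then there exist a
linearly independent family `v₁, …, v_s` in `V` and a direct sum decomposition
`N = N₁ ⊕ ⋯ ⊕ N_s` into nonzero subspaces such that, with `Fᵢ : N → V`, `Fᵢ T = T vᵢ`: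
(1) `Fᵢ` is injective on `Nᵢ`; (2) `N_j ⊆ ker Fᵢ` for `i < j`; (3) `N_j · V ⊆ Fᵢ(Nᵢ)` for
`i < j`. Furthermore, given nonzero operators `T₁, …, T_q ∈ N`, `v₁` can be chosen with
`T_k v₁ ≠ 0` for all `k`. -/
theorem exists_decomposition_of_commuting_nilpotent (k V : Type) [Field k] [CharZero k]
    [AddCommGroup V] [Module k V] [FiniteDimensional k V]
    (N : Submodule k (Module.End k V)) (hN : N ≠ ⊥)
    (hcomm : ∀ S ∈ N, ∀ T ∈ N, Commute S T)
    (hnil : ∀ T ∈ N, IsNilpotent T)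
    (q : ℕ) (Tk : Fin q → Module.End k V) (hTk : ∀ i, Tk i ∈ N) (hTk0 : ∀ i, Tk i ≠ 0) :
    ∃ (s : ℕ) (hs : 0 < s) (v : Fin s → V) (𝒩 : Fin s → Submodule k (Module.End k V)),
      LinearIndependent k v ∧
      (∀ i, 𝒩 i ≠ ⊥) ∧
      iSupIndep 𝒩 ∧
      (⨆ i, 𝒩 i) = N ∧
      (∀ i, ∀ T ∈ 𝒩 i, T (v i) = 0 → T = 0) ∧
      (∀ i j : Fin s, i < j → ∀ T ∈ 𝒩 j, T (v i) = 0) ∧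
      (∀ i j : Fin s, i < j → ∀ T ∈ 𝒩 j, ∀ w : V, ∃ S ∈ 𝒩 i, S (v i) = T w) ∧
      (∀ kk : Fin q, Tk kk (v ⟨0, hs⟩) ≠ 0) := by
  have hL : ∀ T ∈ List.ofFn Tk, T ∈ N ∧ T ≠ 0 := by
    intro T hT
    obtain ⟨i, rfl⟩ := List.mem_ofFn.mp hT
    exact ⟨hTk i, hTk0 i⟩
  obtain ⟨s, hs, v, 𝒩, h1, h2, h3, h4, h5, h6, h7⟩ :=
    aux_main (finrank k ↥N) N le_rfl hN (List.ofFn Tk) hL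
  exact ⟨s, hs, v, 𝒩, li_of_props h1 h4 h5, h1, h2, h3, h4, h5, h6,
    fun kk => h7 (Tk kk) (List.mem_ofFn.mpr ⟨kk, rfl⟩)⟩
end

section
/- Let V be a finite-dimensional vector space over a field k of characteristic zero and let N be a nonzero subspace of End(V) consisting of pairwise commuting nilpotent operators. Then dim V ≥ ⌈2√(dim N)⌉. -/
open Module

section Aux

variable {k V : Type} [Field k] [AddCommGroup V] [Module k V] [FiniteDimensional k V]

set_option maxHeartbeats 1000000 in
set_option synthInstance.maxHeartbeats 400000 in
/-- Long enough products of elements of a commuting nilpotent subspace vanish. -/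
lemma aux_prod_eq_zero (N : Submodule k (Module.End k V))
    (hcomm : ∀ S ∈ N, ∀ T ∈ N, Commute S T)
    (hnil : ∀ T ∈ N, IsNilpotent T) :
    ∃ K : ℕ, ∀ l : List (Module.End k V), (∀ x ∈ l, x ∈ N) → l.length = K →
      l.prod = 0 := by
  classical
  set s : Set (Module.End k V) := (N : Set (Module.End k V)) with hs
  letI : CommRing (Algebra.adjoin k s) :=
    Algebra.adjoinCommRingOfComm k (fun a ha b hb => hcomm a ha b hb)
  haveI : FiniteDimensional k (Algebra.adjoin k s) :=
    FiniteDimensional.finiteDimensional_submodule (Subalgebra.toSubmodule (Algebra.adjoin k s))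
  haveI : IsNoetherianRing (Algebra.adjoin k s) := by
    refine isNoetherianRing_iff.mpr ?_
    exact isNoetherian_of_tower k inferInstance
  set I : Ideal (Algebra.adjoin k s) :=
    Ideal.span {a : Algebra.adjoin k s | (a : Module.End k V) ∈ N} with hI
  have hInil : I ≤ nilradical (Algebra.adjoin k s) := by
    rw [hI, Ideal.span_le]
    rintro a ha
    obtain ⟨m, hm⟩ := hnil (a : Module.End k V) ha
    refine mem_nilradical.mpr ⟨m, Subtype.ext ?_⟩
    simpa using hm
  obtain ⟨K, hK⟩ := IsNoetherianRing.isNilpotent_nilradical (Algebra.adjoin k s)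
  have hIK : I ^ K = ⊥ := by
    refine le_bot_iff.mp ?_
    calc I ^ K ≤ nilradical (Algebra.adjoin k s) ^ K := Ideal.pow_right_mono hInil K
    _ = ⊥ := hK
  refine ⟨K, ?_⟩
  have key : ∀ l : List (Module.End k V), (∀ x ∈ l, x ∈ N) →
      ∃ a : Algebra.adjoin k s, (a : Module.End k V) = l.prod ∧ a ∈ I ^ l.length := by
    intro l
    induction l with
    | nil => intro _; exact ⟨1, by simp, by simp⟩
    | cons x l ih =>
      intro hmem
      obtain ⟨a, ha, haI⟩ := ih (fun y hy => hmem y (List.mem_cons_of_mem x hy))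
      have hx : x ∈ N := hmem x List.mem_cons_self
      refine ⟨(⟨x, Algebra.subset_adjoin hx⟩ : Algebra.adjoin k s) * a, by simp [ha], ?_⟩
      have hxI : (⟨x, Algebra.subset_adjoin hx⟩ : Algebra.adjoin k s) ∈ I :=
        Ideal.subset_span hx
      rw [List.length_cons, pow_succ']
      exact Ideal.mul_mem_mul hxI haI
  intro l hmem hlen
  obtain ⟨a, ha, haI⟩ := key l hmem
  rw [hlen, hIK] at haI
  rw [← ha, Ideal.mem_bot.mp haI]
  rfl

end Aux

/-- **(Schur's bound.)** If `V` is a finite-dimensional vector space over a field `k` of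
characteristic zero and `N` is a nonzero abelian subspace of `End(V)` consisting of
nilpotent operators, then `dim V ≥ ⌈2 √(dim N)⌉`. -/
theorem finrank_ge_of_commuting_nilpotent (k V : Type) [Field k] [CharZero k]
    [AddCommGroup V] [Module k V] [FiniteDimensional k V]
    (N : Submodule k (Module.End k V)) (hN : N ≠ ⊥)
    (hcomm : ∀ S ∈ N, ∀ T ∈ N, Commute S T)
    (hnil : ∀ T ∈ N, IsNilpotent T) :
    ⌈2 * Real.sqrt (finrank k N)⌉₊ ≤ finrank k V := by
  classical
  obtain ⟨K, hK⟩ := aux_prod_eq_zero N hcomm hnil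
  set W : Submodule k V := ⨆ T : N, LinearMap.range (T : Module.End k V) with hWdef
  obtain ⟨U, hU⟩ := Submodule.exists_isCompl W
  have hrange : ∀ T : N, LinearMap.range (T : Module.End k V) ≤ W := fun T =>
    le_iSup (fun T : N => LinearMap.range (T : Module.End k V)) T
  -- the restriction-to-U map
  let Φ : N →ₗ[k] (U →ₗ[k] W) :=
    { toFun := fun T => LinearMap.codRestrict W
        ((T : Module.End k V).comp U.subtype)
        (fun u => hrange T ⟨u, rfl⟩)
      map_add' := fun S T => by
        ext u
        simp
      map_smul' := fun c T => by
        ext u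
        simp }
  -- the iterated image operator
  set F : Submodule k V → Submodule k V :=
    fun X => ⨆ S : N, Submodule.map (S : Module.End k V) X with hF
  have hFmono : Monotone F := fun X Y h =>
    iSup_mono fun S => Submodule.map_mono h
  have hiter : ∀ (j : ℕ) (X : Submodule k V), F^[j] X ≤
      ⨆ l : {l : List (Module.End k V) // (∀ x ∈ l, x ∈ N) ∧ l.length = j},
        Submodule.map l.1.prod X := by
    intro j
    induction j with
    | zero =>
      intro X
      have : Submodule.map (List.prod ([] : List (Module.End k V))) X = X := by
        simp [Module.End.one_eq_id]
      calc F^[0] X = X := rfl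
      _ = Submodule.map (List.prod ([] : List (Module.End k V))) X := this.symm
      _ ≤ _ := le_iSup
          (fun l : {l : List (Module.End k V) // (∀ x ∈ l, x ∈ N) ∧ l.length = 0} =>
            Submodule.map l.1.prod X)
          (⟨[], by simp, rfl⟩ :
          {l : List (Module.End k V) // (∀ x ∈ l, x ∈ N) ∧ l.length = 0})
    | succ j ih =>
      intro X
      rw [Function.iterate_succ_apply']
      refine le_trans (hFmono (ih X)) ?_
      refine iSup_le fun S => ?_
      rw [Submodule.map_iSup]
      refine iSup_le fun l => ?_
      have hcomp : Submodule.map (S : Module.End k V) (Submodule.map l.1.prod X)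
          = Submodule.map (((S : Module.End k V) :: l.1).prod) X := by
        rw [List.prod_cons, Module.End.mul_eq_comp, Submodule.map_comp]
      rw [hcomp]
      refine le_iSup
        (fun l : {l : List (Module.End k V) // (∀ x ∈ l, x ∈ N) ∧ l.length = j + 1} =>
          Submodule.map l.1.prod X)
        (⟨(S : Module.End k V) :: l.1, ?_, by simp [l.2.2]⟩)
      intro x hx
      rcases List.mem_cons.mp hx with h | h
      · exact h ▸ S.2
      · exact l.2.1 x h
  have hFK : ∀ X : Submodule k V, F^[K] X = ⊥ := by
    intro X
    refine le_bot_iff.mp (le_trans (hiter K X) (iSup_le fun l => ?_))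
    rw [hK l.1 l.2.1 l.2.2, Submodule.map_zero]
  -- injectivity of Φ
  have hinj : Function.Injective Φ := by
    rw [← LinearMap.ker_eq_bot]
    rw [LinearMap.ker_eq_bot']
    intro T hT0
    have hTU : ∀ u ∈ U, (T : Module.End k V) u = 0 := by
      intro u hu
      have h1 : Φ T ⟨u, hu⟩ = 0 := by rw [hT0]; rfl
      exact congrArg Subtype.val h1
    have step1 : LinearMap.range (T : Module.End k V) ≤
        F (LinearMap.range (T : Module.End k V)) := by
      rintro v ⟨x, rfl⟩
      have hx : x ∈ W ⊔ U := by rw [hU.sup_eq_top]; trivial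
      obtain ⟨w, hw, u, hu, rfl⟩ := Submodule.mem_sup.mp hx
      rw [map_add, hTU u hu, add_zero]
      refine Submodule.iSup_induction (motive := fun w =>
          (T : Module.End k V) w ∈ F (LinearMap.range (T : Module.End k V)))
        (fun T : N => LinearMap.range (T : Module.End k V)) hw ?_ ?_ ?_
      · rintro S v ⟨y, rfl⟩
        have hc : Commute ((T : Module.End k V)) ((S : Module.End k V)) :=
          hcomm _ T.2 _ S.2
        have happ : (T : Module.End k V) ((S : Module.End k V) y)
            = (S : Module.End k V) ((T : Module.End k V) y) := by
          have := LinearMap.ext_iff.mp hc y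
          simpa [Module.End.mul_apply] using this
        rw [happ]
        refine le_iSup (fun S : N =>
            Submodule.map (S : Module.End k V) (LinearMap.range (T : Module.End k V))) S ?_
        exact Submodule.mem_map_of_mem ⟨y, rfl⟩
      · simp
      · intro a b ha hb
        rw [map_add]
        exact add_mem ha hb
    have step2 : ∀ j, LinearMap.range (T : Module.End k V) ≤
        F^[j] (LinearMap.range (T : Module.End k V)) := by
      intro j
      induction j with
      | zero => exact le_rfl
      | succ j ih =>
        rw [Function.iterate_succ_apply]
        exact le_trans ih (le_trans ((hFmono.iterate j) step1) le_rfl)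
    have hbot : LinearMap.range (T : Module.End k V) = ⊥ :=
      le_bot_iff.mp (le_trans (step2 K) (le_of_eq (hFK _)))
    have : (T : Module.End k V) = 0 := LinearMap.range_eq_bot.mp hbot
    exact Subtype.ext this
  -- dimension count
  have hle : finrank k N ≤ finrank k U * finrank k W := by
    have := LinearMap.finrank_le_finrank_of_injective hinj
    rwa [Module.finrank_linearMap] at this
  have hsum : finrank k W + finrank k U = finrank k V :=
    Submodule.finrank_add_eq_of_isCompl hU
  rw [Nat.ceil_le]
  have hd : (0:ℝ) ≤ (finrank k N : ℝ) := Nat.cast_nonneg _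
  have hs := Real.sq_sqrt hd
  have hsn := Real.sqrt_nonneg ((finrank k N : ℝ))
  have hleR : (finrank k N : ℝ) ≤ (finrank k U : ℝ) * (finrank k W : ℝ) := by
    exact_mod_cast Nat.cast_le.mpr hle
  have hsumR : (finrank k W : ℝ) + (finrank k U : ℝ) = (finrank k V : ℝ) := by
    exact_mod_cast congrArg (Nat.cast : ℕ → ℝ) hsum
  have hu0 : (0:ℝ) ≤ (finrank k U : ℝ) := Nat.cast_nonneg _
  have hw0 : (0:ℝ) ≤ (finrank k W : ℝ) := Nat.cast_nonneg _
  have hv0 : (0:ℝ) ≤ (finrank k V : ℝ) := Nat.cast_nonneg _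
  nlinarith [sq_nonneg ((finrank k U : ℝ) - (finrank k W : ℝ)),
    sq_nonneg (2 * Real.sqrt (finrank k N) - (finrank k V : ℝ))]
end
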